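/- arXiv:0911.3474 — 9 statements merged into one kernel-verified Lean document; each statement's English description precedes it below -/
import Mathlib

section
/- For every x, v ∈ E, the function t ↦ f(x + t·v) has right derivative at t = 0 (derivative within [0,∞) at 0) equal to ⟨v, H(x)⟩ + μ({x})·‖v‖, and left derivative at t = 0 (derivative within (−∞,0] at 0) equal to ⟨v, H(x)⟩ − μ({x})·‖v‖. -/
open MeasureTheory Metric
open scoped RealInnerProductSpace

/-!
Split `μ` into its atom at `x` and its restriction to `{x}ᶜ`. On `{x}ᶜ` every integrand
`t ↦ ‖x + t • v - p‖` is differentiable at `0` with derivative `⟪v, (x - p) / ‖x - p‖⟫` and is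
`‖v‖`-Lipschitz, so dominated convergence lets us differentiate under the integral. The atom
contributes `μ {x} * |t| * ‖v‖`, whose one-sided derivatives at `0` are `± μ {x} * ‖v‖`.
-/

section NormedGroup

variable {E : Type*} [NormedAddCommGroup E] [MeasurableSpace E] [BorelSpace E] {μ : Measure E}

theorem integrable_norm_sub_of_ae_mem_ball [IsFiniteMeasure μ] {a : E} {ρ : ℝ}
    (h : ∀ᵐ p ∂μ, p ∈ ball a ρ) (z : E) : Integrable (fun p => ‖z - p‖) μ := by
  refine (integrable_const (‖z - a‖ + ρ)).mono'
    (continuous_const.sub continuous_id).norm.aestronglyMeasurable ?_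
  filter_upwards [h] with p hp
  rw [norm_norm]
  linarith [norm_sub_le_norm_sub_add_norm_sub z a p, dist_eq_norm a p ▸ mem_ball'.mp hp]

theorem integrable_norm_sub_of_integrable_norm_sub [IsFiniteMeasure μ] {x : E}
    (hx : Integrable (fun p => ‖x - p‖) μ) (z : E) : Integrable (fun p => ‖z - p‖) μ :=
  (hx.add (integrable_const ‖z - x‖)).mono'
    (continuous_const.sub continuous_id).norm.aestronglyMeasurable
    (ae_of_all _ fun p => by
      rw [norm_norm, add_comm]; exact norm_sub_le_norm_sub_add_norm_sub z x p)

theorem integral_norm_sub_eq_setIntegral_compl_add (x : E) {y : E}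
    (hy : Integrable (fun p => ‖y - p‖) μ) :
    ∫ p, ‖y - p‖ ∂μ = ∫ p in {x}ᶜ, ‖y - p‖ ∂μ + μ.real {x} * ‖y - x‖ := by
  rw [← integral_add_compl (MeasurableSet.singleton x) hy, integral_singleton, smul_eq_mul,
    add_comm]

end NormedGroup

section InnerProductSpace

variable {E : Type*} [NormedAddCommGroup E] [InnerProductSpace ℝ E]

theorem hasDerivAt_norm_add_smul {w : E} (hw : w ≠ 0) (v : E) :
    HasDerivAt (fun t : ℝ => ‖w + t • v‖) ⟪v, ‖w‖⁻¹ • w⟫ 0 := by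
  have hline : HasDerivAt (fun t : ℝ => w + t • v) v 0 := by
    simpa using ((hasDerivAt_id (0 : ℝ)).smul_const v).const_add w
  have hsqrt := hline.norm_sq.sqrt (by simpa using hw)
  simp only [Real.sqrt_sq (norm_nonneg _), zero_smul, add_zero] at hsqrt
  convert hsqrt using 1
  rw [real_inner_smul_right, real_inner_comm]
  field_simp

theorem lipschitzWith_norm_add_smul_sub (x v p : E) :
    LipschitzWith (Real.nnabs ‖v‖) (fun t : ℝ => ‖x + t • v - p‖) := by
  refine LipschitzWith.of_dist_le_mul fun s t => ?_
  have hdiff : (x + s • v - p) - (x + t • v - p) = (s - t) • v := by rw [sub_smul]; abel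
  calc dist ‖x + s • v - p‖ ‖x + t • v - p‖
      ≤ ‖(x + s • v - p) - (x + t • v - p)‖ := dist_norm_norm_le _ _
    _ = Real.nnabs ‖v‖ * dist s t := by
        rw [hdiff, norm_smul, Real.coe_nnabs, abs_norm, Real.dist_eq, Real.norm_eq_abs, mul_comm]

variable [CompleteSpace E] [SecondCountableTopology E] [MeasurableSpace E] [BorelSpace E]
  {μ : Measure E} [IsFiniteMeasure μ]

theorem hasDerivAt_setIntegral_compl_norm_add_smul_sub {x : E}
    (hx : Integrable (fun p => ‖x - p‖) μ) (v : E) :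
    HasDerivAt (fun t : ℝ => ∫ p in {x}ᶜ, ‖x + t • v - p‖ ∂μ)
      ⟪v, ∫ p in {x}ᶜ, ‖x - p‖⁻¹ • (x - p) ∂μ⟫ 0 := by
  have hmeas : Measurable fun p : E => ‖x - p‖⁻¹ • (x - p) :=
    (measurable_const.sub measurable_id).norm.inv.smul (measurable_const.sub measurable_id)
  have hint : Integrable (fun p : E => ‖x - p‖⁻¹ • (x - p)) (μ.restrict {x}ᶜ) :=
    (integrable_const (1 : ℝ)).mono' hmeas.aestronglyMeasurable (ae_of_all _ fun p => by
      rw [norm_smul, norm_inv, norm_norm]; exact inv_mul_le_one_of_le₀ le_rfl (norm_nonneg _))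
  rw [← integral_inner hint]
  refine (hasDerivAt_integral_of_dominated_loc_of_lip (bound := fun _ => ‖v‖) Filter.univ_mem
    (Filter.Eventually.of_forall fun t =>
      (continuous_const.sub continuous_id).norm.aestronglyMeasurable)
    (by simpa using hx.restrict) (measurable_const.inner hmeas).aestronglyMeasurable
    (ae_of_all _ fun p => (lipschitzWith_norm_add_smul_sub x v p).lipschitzOnWith)
    (integrable_const _) ?_).2
  filter_upwards [ae_restrict_mem (MeasurableSet.singleton x).compl] with p hp
  simpa [add_sub_right_comm] using hasDerivAt_norm_add_smul (sub_ne_zero.mpr (Ne.symm hp)) v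

theorem hasDerivWithinAt_integral_norm_add_smul_sub {x : E}
    (hx : Integrable (fun p => ‖x - p‖) μ) (v : E) {s : Set ℝ} {σ : ℝ}
    (habs : HasDerivWithinAt (fun t : ℝ => |t|) σ s 0) :
    HasDerivWithinAt (fun t : ℝ => ∫ p, ‖x + t • v - p‖ ∂μ)
      (⟪v, ∫ p in {x}ᶜ, ‖x - p‖⁻¹ • (x - p) ∂μ⟫ + μ.real {x} * (σ * ‖v‖)) s 0 := by
  have hsplit : ∀ t : ℝ, ∫ p, ‖x + t • v - p‖ ∂μ
      = ∫ p in {x}ᶜ, ‖x + t • v - p‖ ∂μ + μ.real {x} * (|t| * ‖v‖) := fun t => by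
    rw [integral_norm_sub_eq_setIntegral_compl_add x
        (integrable_norm_sub_of_integrable_norm_sub hx _),
      add_sub_cancel_left, norm_smul, Real.norm_eq_abs]
  simp only [hsplit]
  exact (hasDerivAt_setIntegral_compl_norm_add_smul_sub hx v).hasDerivWithinAt.add
    ((habs.mul_const ‖v‖).const_mul _)

end InnerProductSpace

theorem stmt1_general {n : ℕ} (a : EuclideanSpace ℝ (Fin n)) (ρ : ℝ)
    (μ : Measure (EuclideanSpace ℝ (Fin n))) [IsProbabilityMeasure μ]
    (hsupp : {x : EuclideanSpace ℝ (Fin n) | ∀ U ∈ nhds x, 0 < μ U} ⊆ ball a ρ)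
    (f : EuclideanSpace ℝ (Fin n) → ℝ)
    (hf : ∀ x, f x = ∫ p, ‖x - p‖ ∂μ)
    (H : EuclideanSpace ℝ (Fin n) → EuclideanSpace ℝ (Fin n))
    (hH : ∀ x, H x = ∫ p in ({x}ᶜ : Set (EuclideanSpace ℝ (Fin n))), ‖x - p‖⁻¹ • (x - p) ∂μ)
    (x v : EuclideanSpace ℝ (Fin n)) :
    HasDerivWithinAt (fun t : ℝ => f (x + t • v))
      (⟪v, H x⟫ + (μ {x}).toReal * ‖v‖) (Set.Ici 0) 0 ∧
    HasDerivWithinAt (fun t : ℝ => f (x + t • v))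
      (⟪v, H x⟫ - (μ {x}).toReal * ‖v‖) (Set.Iic 0) 0 := by
  have hball : ∀ᵐ p ∂μ, p ∈ ball a ρ :=
    Filter.mem_of_superset μ.support_mem_ae fun y hy => hsupp ((μ.mem_support_iff_forall y).1 hy)
  have hx := integrable_norm_sub_of_ae_mem_ball hball x
  have habs_Ici : HasDerivWithinAt (fun t : ℝ => |t|) 1 (Set.Ici 0) 0 :=
    (hasDerivWithinAt_id 0 _).congr (fun t ht => abs_of_nonneg ht) abs_zero
  have habs_Iic : HasDerivWithinAt (fun t : ℝ => |t|) (-1) (Set.Iic 0) 0 :=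
    (hasDerivWithinAt_neg 0 _).congr (fun t ht => abs_of_nonpos ht) (by simp)
  simp only [hf, hH, ← measureReal_def]
  exact ⟨by simpa using hasDerivWithinAt_integral_norm_add_smul_sub hx v habs_Ici,
    by simpa [sub_eq_add_neg] using hasDerivWithinAt_integral_norm_add_smul_sub hx v habs_Iic⟩

/-- Euclidean case of Proposition 2.4, one-sided derivatives.
With `f x = ∫ ‖x - p‖ dμ(p)` and `H x = ∫_{E∖{x}} (x-p)/‖x-p‖ dμ(p)`, for every `x, v`
the map `t ↦ f (x + t v)` has right derivative `⟪v, H x⟫ + μ{x}‖v‖` at `0` and left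
derivative `⟪v, H x⟫ - μ{x}‖v‖` at `0`. -/
theorem stmt1 {n : ℕ} (hn : 1 ≤ n) (a : EuclideanSpace ℝ (Fin n)) (ρ : ℝ) (hρ : 0 < ρ)
    (μ : Measure (EuclideanSpace ℝ (Fin n))) [IsProbabilityMeasure μ]
    (hsupp : {x : EuclideanSpace ℝ (Fin n) | ∀ U ∈ nhds x, 0 < μ U} ⊆ ball a ρ)
    (f : EuclideanSpace ℝ (Fin n) → ℝ)
    (hf : ∀ x, f x = ∫ p, ‖x - p‖ ∂μ)
    (H : EuclideanSpace ℝ (Fin n) → EuclideanSpace ℝ (Fin n))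
    (hH : ∀ x, H x = ∫ p in ({x}ᶜ : Set (EuclideanSpace ℝ (Fin n))), ‖x - p‖⁻¹ • (x - p) ∂μ)
    (x v : EuclideanSpace ℝ (Fin n)) :
    HasDerivWithinAt (fun t : ℝ => f (x + t • v))
      (⟪v, H x⟫ + (μ {x}).toReal * ‖v‖) (Set.Ici 0) 0 ∧
    HasDerivWithinAt (fun t : ℝ => f (x + t • v))
      (⟪v, H x⟫ - (μ {x}).toReal * ‖v‖) (Set.Iic 0) 0 :=
  stmt1_general a ρ μ hsupp f hf H hH x v
end

section
/- For every x ∈ E one has ‖H(x)‖ ≤ 1; if μ({x}) = 0 then f is Fréchet differentiable at x with derivative v ↦ ⟨v, H(x)⟩ (i.e., the gradient of f at x equals H(x)); and H is continuous at every point of the complement of the support of μ. -/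
/-!
Each integrand `‖x - p‖⁻¹ • (x - p)` is a unit vector or zero, so `‖H x‖ ≤ 1`. When `μ {x} = 0`,
almost every map `‖· - p‖` is differentiable at `x` with gradient `‖x - p‖⁻¹ • (x - p)`, and all
of them are `1`-Lipschitz, so `f` can be differentiated under the integral sign. Points off the
(closed) support of `μ` carry no mass, so near such a point `H` is the integral over the whole
space of a bounded integrand that is continuous in `x` for almost every `p`.
-/

open MeasureTheory Metric

section InnerProductSpace

variable {E : Type*} [NormedAddCommGroup E] [InnerProductSpace ℝ E]

theorem hasFDerivAt_norm {x : E} (hx : x ≠ 0) :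
    HasFDerivAt (‖·‖) (innerSL ℝ (‖x‖⁻¹ • x)) x := by
  have hsqrt := (hasStrictFDerivAt_norm_sq x).hasFDerivAt.sqrt (by positivity)
  simp only [Real.sqrt_sq (norm_nonneg _)] at hsqrt
  refine hsqrt.congr_fderiv (ContinuousLinearMap.ext fun v ↦ ?_)
  simp
  field_simp

theorem hasFDerivAt_norm_sub {p x : E} (hx : x ≠ p) :
    HasFDerivAt (fun y ↦ ‖y - p‖) (innerSL ℝ (‖x - p‖⁻¹ • (x - p))) x :=
  (hasFDerivAt_norm (sub_ne_zero.2 hx)).comp (f := fun y ↦ y - p) x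
    ((hasFDerivAt_id x).sub_const p)

end InnerProductSpace

theorem norm_inv_norm_smul_le_one {E : Type*} [NormedAddCommGroup E] [NormedSpace ℝ E] (y : E) :
    ‖‖y‖⁻¹ • y‖ ≤ 1 := by
  rcases eq_or_ne y 0 with rfl | hy
  · simp
  · exact (norm_smul_inv_norm hy).le

theorem setIntegral_compl_singleton_of_measure_eq_zero {α F : Type*} [MeasurableSpace α]
    [MeasurableSingletonClass α] [NormedAddCommGroup F] [NormedSpace ℝ F] {μ : Measure α} {x : α}
    (hx : μ {x} = 0) (g : α → F) : ∫ p in {x}ᶜ, g p ∂μ = ∫ p, g p ∂μ := by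
  rw [setIntegral_congr_set (ae_eq_univ.2 (by simpa using hx)), setIntegral_univ]

theorem MeasureTheory.Measure.measure_singleton_eq_zero_of_notMem_support {X : Type*}
    [TopologicalSpace X] [MeasurableSpace X] {μ : Measure X} {x : X} (hx : x ∉ μ.support) :
    μ {x} = 0 := by
  obtain ⟨U, hU, hU0⟩ := Measure.notMem_support_iff_exists.1 hx
  exact measure_mono_null (Set.singleton_subset_iff.2 (mem_of_mem_nhds hU)) hU0

theorem integrable_norm_sub_of_isBounded_support {E : Type*} [NormedAddCommGroup E]
    [MeasurableSpace E] [BorelSpace E] [SecondCountableTopology E] {μ : Measure E}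
    [IsFiniteMeasure μ] (hμ : Bornology.IsBounded μ.support) (x : E) :
    Integrable (fun p ↦ ‖x - p‖) μ := by
  obtain ⟨r, hr⟩ := hμ.subset_closedBall x
  refine .of_bound (by fun_prop) r ?_
  filter_upwards [Measure.support_mem_ae] with p hp
  simpa [dist_comm, dist_eq_norm] using hr hp

section NormedSpace

variable {E : Type*} [NormedAddCommGroup E] [NormedSpace ℝ E] [MeasurableSpace E] {μ : Measure E}

theorem norm_setIntegral_inv_norm_smul_sub_le_one [IsProbabilityMeasure μ] (x : E) (s : Set E) :
    ‖∫ p in s, ‖x - p‖⁻¹ • (x - p) ∂μ‖ ≤ 1 :=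
  calc ‖∫ p in s, ‖x - p‖⁻¹ • (x - p) ∂μ‖
      ≤ 1 * μ.real s :=
        norm_setIntegral_le_of_norm_le_const (measure_lt_top _ _)
          fun p _ ↦ norm_inv_norm_smul_le_one (x - p)
    _ ≤ 1 := by simp

variable [BorelSpace E] [SecondCountableTopology E]

theorem aestronglyMeasurable_inv_norm_smul_sub (x : E) :
    AEStronglyMeasurable (fun p ↦ ‖x - p‖⁻¹ • (x - p)) μ := by
  fun_prop

theorem integrable_inv_norm_smul_sub [IsFiniteMeasure μ] (x : E) :
    Integrable (fun p ↦ ‖x - p‖⁻¹ • (x - p)) μ :=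
  .of_bound (aestronglyMeasurable_inv_norm_smul_sub x) 1
    (.of_forall fun p ↦ norm_inv_norm_smul_le_one (x - p))

theorem continuousAt_integral_inv_norm_smul_sub [IsFiniteMeasure μ] {x : E} (hx : μ {x} = 0) :
    ContinuousAt (fun y ↦ ∫ p, ‖y - p‖⁻¹ • (y - p) ∂μ) x := by
  refine continuousAt_of_dominated (bound := fun _ ↦ 1)
    (.of_forall aestronglyMeasurable_inv_norm_smul_sub)
    (.of_forall fun y ↦ .of_forall fun p ↦ norm_inv_norm_smul_le_one (y - p))
    (integrable_const 1) ?_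
  filter_upwards [compl_mem_ae_iff.2 hx] with p hp
  have hxp : ‖x - p‖ ≠ 0 := norm_ne_zero_iff.2 (sub_ne_zero.2 (Ne.symm hp))
  fun_prop (disch := exact hxp)

end NormedSpace

theorem hasFDerivAt_integral_norm_sub {E : Type*} [NormedAddCommGroup E] [InnerProductSpace ℝ E]
    [CompleteSpace E] [MeasurableSpace E] [BorelSpace E] [SecondCountableTopology E]
    {μ : Measure E} [IsFiniteMeasure μ] {x : E}
    (hint : Integrable (fun p ↦ ‖x - p‖) μ) (hx : μ {x} = 0) :
    HasFDerivAt (fun y ↦ ∫ p, ‖y - p‖ ∂μ) (innerSL ℝ (∫ p, ‖x - p‖⁻¹ • (x - p) ∂μ)) x := by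
  have hlip : ∀ᵐ p ∂μ, ∀ y ∈ (Set.univ : Set E), ‖‖y - p‖ - ‖x - p‖‖ ≤ 1 * ‖y - x‖ :=
    .of_forall fun p y _ ↦ by simpa using abs_norm_sub_norm_le (y - p) (x - p)
  have hdiff : ∀ᵐ p ∂μ, HasFDerivAt (fun y ↦ ‖y - p‖) (innerSL ℝ (‖x - p‖⁻¹ • (x - p))) x := by
    filter_upwards [compl_mem_ae_iff.2 hx] with p hp
    exact hasFDerivAt_norm_sub (Ne.symm hp)
  rw [← (innerSL ℝ).integral_comp_comm (integrable_inv_norm_smul_sub x)]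
  exact (hasFDerivAt_integral_of_dominated_loc_of_lip' Filter.univ_mem (fun _ _ ↦ by fun_prop)
    hint ((innerSL ℝ).continuous.comp_aestronglyMeasurable
      (aestronglyMeasurable_inv_norm_smul_sub x)) hlip (integrable_const 1) hdiff).2

theorem stmt2_general {n : ℕ} (a : EuclideanSpace ℝ (Fin n)) (ρ : ℝ)
    (μ : Measure (EuclideanSpace ℝ (Fin n))) [IsProbabilityMeasure μ]
    (hsupp : {x : EuclideanSpace ℝ (Fin n) | ∀ U ∈ nhds x, 0 < μ U} ⊆ ball a ρ)
    (f : EuclideanSpace ℝ (Fin n) → ℝ)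
    (hf : ∀ x, f x = ∫ p, ‖x - p‖ ∂μ)
    (H : EuclideanSpace ℝ (Fin n) → EuclideanSpace ℝ (Fin n))
    (hH : ∀ x, H x = ∫ p in ({x}ᶜ : Set (EuclideanSpace ℝ (Fin n))), ‖x - p‖⁻¹ • (x - p) ∂μ) :
    (∀ x, ‖H x‖ ≤ 1) ∧
    (∀ x, μ {x} = 0 → HasFDerivAt f ((innerSL ℝ) (H x)) x) ∧
    (∀ x, x ∉ {y : EuclideanSpace ℝ (Fin n) | ∀ U ∈ nhds y, 0 < μ U} → ContinuousAt H x) := by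
  have hS : {x : EuclideanSpace ℝ (Fin n) | ∀ U ∈ nhds x, 0 < μ U} = μ.support :=
    Set.ext fun x ↦ (Measure.mem_support_iff_forall x).symm
  rw [hS] at hsupp ⊢
  have hH' : ∀ x, μ {x} = 0 → H x = ∫ p, ‖x - p‖⁻¹ • (x - p) ∂μ := fun x hx ↦ by
    rw [hH, setIntegral_compl_singleton_of_measure_eq_zero hx]
  refine ⟨fun x ↦ hH x ▸ norm_setIntegral_inv_norm_smul_sub_le_one x _, fun x hx ↦ ?_, fun x hx ↦ ?_⟩
  · rw [funext hf, hH' x hx]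
    exact hasFDerivAt_integral_norm_sub
      (integrable_norm_sub_of_isBounded_support (isBounded_ball.subset hsupp) x) hx
  · refine (continuousAt_integral_inv_norm_smul_sub
      (Measure.measure_singleton_eq_zero_of_notMem_support hx)).congr ?_
    filter_upwards [Measure.isOpen_compl_support.mem_nhds hx] with y hy
    exact (hH' y (Measure.measure_singleton_eq_zero_of_notMem_support hy)).symm

/-- Euclidean case of Proposition 2.4, remaining assertions.
`‖H x‖ ≤ 1` for all `x`; if `μ{x} = 0` then `f` is Fréchet differentiable at `x` with
derivative `v ↦ ⟪v, H x⟫` (gradient `H x`); and `H` is continuous outside the support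
of `μ`. -/
theorem stmt2 {n : ℕ} (hn : 1 ≤ n) (a : EuclideanSpace ℝ (Fin n)) (ρ : ℝ) (hρ : 0 < ρ)
    (μ : Measure (EuclideanSpace ℝ (Fin n))) [IsProbabilityMeasure μ]
    (hsupp : {x : EuclideanSpace ℝ (Fin n) | ∀ U ∈ nhds x, 0 < μ U} ⊆ ball a ρ)
    (f : EuclideanSpace ℝ (Fin n) → ℝ)
    (hf : ∀ x, f x = ∫ p, ‖x - p‖ ∂μ)
    (H : EuclideanSpace ℝ (Fin n) → EuclideanSpace ℝ (Fin n))
    (hH : ∀ x, H x = ∫ p in ({x}ᶜ : Set (EuclideanSpace ℝ (Fin n))), ‖x - p‖⁻¹ • (x - p) ∂μ) :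
    (∀ x, ‖H x‖ ≤ 1) ∧
    (∀ x, μ {x} = 0 → HasFDerivAt f ((innerSL ℝ) (H x)) x) ∧
    (∀ x, x ∉ {y : EuclideanSpace ℝ (Fin n) | ∀ U ∈ nhds y, 0 < μ U} → ContinuousAt H x) :=
  stmt2_general a ρ μ hsupp f hf H hH
end

section
/- The median set 𝔐_μ is contained in the closure of the convex hull of the support of μ (the smallest closed convex subset containing supp μ). -/
/-!
If a point `x` lies outside the closed convex set `K = closure (conv (supp μ))`, its metric
projection `y` onto `K` is strictly closer than `x` to every point of `K`, hence to
`μ`-almost every point. Integrating, `∫ ‖y - p‖ dμ < ∫ ‖x - p‖ dμ`, and `y` lies in the closed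
ball because `K` does; so `x` is not a minimizer.
-/

open MeasureTheory Metric

section Projection

variable {E : Type*} [NormedAddCommGroup E] [InnerProductSpace ℝ E]

theorem exists_mem_forall_norm_sub_lt_of_notMem {K : Set E} (hne : K.Nonempty)
    (hcomplete : IsComplete K) (hconv : Convex ℝ K) {x : E} (hx : x ∉ K) :
    ∃ y ∈ K, ∀ p ∈ K, ‖y - p‖ < ‖x - p‖ := by
  obtain ⟨y, hyK, hy⟩ := exists_norm_eq_iInf_of_complete_convex hne hcomplete hconv x
  have hproj := (norm_eq_iInf_iff_real_inner_le_zero hconv hyK).1 hy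
  have hxy : 0 < ‖x - y‖ := norm_pos_iff.2 (sub_ne_zero.2 fun h => hx (h ▸ hyK))
  refine ⟨y, hyK, fun p hp => ?_⟩
  have hinner : 0 ≤ inner ℝ (x - y) (y - p) := by
    rw [← neg_sub p y, inner_neg_right]
    linarith [hproj p hp]
  have hsq : ‖x - p‖ ^ 2 = ‖x - y‖ ^ 2 + 2 * inner ℝ (x - y) (y - p) + ‖y - p‖ ^ 2 := by
    rw [← norm_add_sq_real, sub_add_sub_cancel]
  refine lt_of_pow_lt_pow_left₀ 2 (norm_nonneg _) ?_
  nlinarith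

end Projection

section Integral

variable {α : Type*} [MeasurableSpace α] {μ : Measure α}

theorem integral_lt_integral_of_forall_mem_lt {f g : α → ℝ} {s : Set α} (hμ : μ ≠ 0)
    (hf : Integrable f μ) (hg : Integrable g μ) (hs : s ∈ ae μ) (hlt : ∀ x ∈ s, f x < g x) :
    ∫ x, f x ∂μ < ∫ x, g x ∂μ := by
  have hnonneg : 0 ≤ᵐ[μ] fun x => g x - f x := by
    filter_upwards [hs] with x hx using sub_nonneg.2 (hlt x hx).le
  have hsupport : s ⊆ Function.support fun x => g x - f x :=
    fun x hx => sub_ne_zero.2 (hlt x hx).ne'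
  have hpos : 0 < μ (Function.support fun x => g x - f x) :=
    calc 0 < μ Set.univ := Measure.measure_univ_pos.2 hμ
      _ = μ s := (measure_congr (Filter.eventuallyEq_univ.2 hs)).symm
      _ ≤ _ := measure_mono hsupport
  have := (integral_pos_iff_support_of_nonneg_ae hnonneg (hg.sub hf)).2 hpos
  rw [integral_sub hg hf] at this
  linarith

end Integral

section Median

variable {E : Type*} [NormedAddCommGroup E] [MeasurableSpace E] {μ : Measure E}

theorem integrable_norm_sub_of_ae_mem_closedBall [OpensMeasurableSpace E] [IsFiniteMeasure μ] {a : E} {r : ℝ}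
    (h : ∀ᵐ p ∂μ, p ∈ closedBall a r) (z : E) : Integrable (fun p => ‖z - p‖) μ := by
  refine .of_bound (continuous_const.sub continuous_id).norm.aestronglyMeasurable
    (‖z - a‖ + r) ?_
  filter_upwards [h] with p hp
  rw [norm_norm]
  calc ‖z - p‖ ≤ ‖z - a‖ + ‖a - p‖ := norm_sub_le_norm_sub_add_norm_sub z a p
    _ ≤ ‖z - a‖ + r := by rw [← dist_eq_norm a p]; gcongr; exact mem_closedBall'.1 hp

variable [InnerProductSpace ℝ E] [CompleteSpace E] [HereditarilyLindelofSpace E]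

theorem mem_closure_convexHull_support_of_isMinOn {C : Set E} {x : E} (hμ : μ ≠ 0)
    (hint : ∀ z, Integrable (fun p => ‖z - p‖) μ)
    (hC : closure (convexHull ℝ μ.support) ⊆ C)
    (hmin : IsMinOn (fun z => ∫ p, ‖z - p‖ ∂μ) C x) :
    x ∈ closure (convexHull ℝ μ.support) := by
  by_contra hx
  obtain ⟨y, hyK, hy⟩ := exists_mem_forall_norm_sub_lt_of_notMem
    ((Measure.nonempty_support hμ).mono ((subset_convexHull ℝ _).trans subset_closure))
    isClosed_closure.isComplete (convex_convexHull ℝ _).closure hx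
  have hlt : ∫ p, ‖y - p‖ ∂μ < ∫ p, ‖x - p‖ ∂μ :=
    integral_lt_integral_of_forall_mem_lt hμ (hint y) (hint x) Measure.support_mem_ae
      fun p hp => hy p (subset_closure (subset_convexHull ℝ _ hp))
  exact (hmin (hC hyK)).not_gt hlt

end Median

theorem stmt4_general {n : ℕ} (a : EuclideanSpace ℝ (Fin n)) (ρ : ℝ)
    (μ : Measure (EuclideanSpace ℝ (Fin n))) [IsProbabilityMeasure μ]
    (hsupp : {x : EuclideanSpace ℝ (Fin n) | ∀ U ∈ nhds x, 0 < μ U} ⊆ ball a ρ)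
    (f : EuclideanSpace ℝ (Fin n) → ℝ)
    (hf : ∀ x, f x = ∫ p, ‖x - p‖ ∂μ) :
    {x ∈ closedBall a ρ | IsMinOn f (closedBall a ρ) x} ⊆
      closure (convexHull ℝ {x : EuclideanSpace ℝ (Fin n) | ∀ U ∈ nhds x, 0 < μ U}) := by
  have hsupport : {x : EuclideanSpace ℝ (Fin n) | ∀ U ∈ nhds x, 0 < μ U} = μ.support :=
    Set.ext fun x => (Measure.mem_support_iff_forall x).symm
  rw [hsupport] at hsupp ⊢
  obtain rfl : f = fun z => ∫ p, ‖z - p‖ ∂μ := funext hf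
  have hsuppBall : μ.support ⊆ closedBall a ρ := hsupp.trans ball_subset_closedBall
  rintro x ⟨-, hmin⟩
  exact mem_closure_convexHull_support_of_isMinOn (IsProbabilityMeasure.ne_zero μ)
    (integrable_norm_sub_of_ae_mem_closedBall
      (Filter.mem_of_superset Measure.support_mem_ae hsuppBall))
    (closure_minimal (convexHull_min hsuppBall (convex_closedBall a ρ)) isClosed_closedBall)
    hmin

/-- Euclidean case of Proposition 2.7, location of the median.
The set of minimizers of `f` over `B̄(a,ρ)` is contained in the closure of the convex
hull of the support of `μ` (the smallest closed convex set containing `supp μ`). -/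
theorem stmt4 {n : ℕ} (hn : 1 ≤ n) (a : EuclideanSpace ℝ (Fin n)) (ρ : ℝ) (hρ : 0 < ρ)
    (μ : Measure (EuclideanSpace ℝ (Fin n))) [IsProbabilityMeasure μ]
    (hsupp : {x : EuclideanSpace ℝ (Fin n) | ∀ U ∈ nhds x, 0 < μ U} ⊆ ball a ρ)
    (f : EuclideanSpace ℝ (Fin n) → ℝ)
    (hf : ∀ x, f x = ∫ p, ‖x - p‖ ∂μ) :
    {x ∈ closedBall a ρ | IsMinOn f (closedBall a ρ) x} ⊆
      closure (convexHull ℝ {x : EuclideanSpace ℝ (Fin n) | ∀ U ∈ nhds x, 0 < μ U}) :=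
  stmt4_general a ρ μ hsupp f hf
end

section
/- If condition (*) holds, then f is strictly convex on the closed ball B̄(a,ρ), and consequently the median set 𝔐_μ has exactly one element (f has a unique minimizer on B̄(a,ρ)). -/
/-!
For every `p`, the map `x ↦ ‖x - p‖` is convex, and in a strictly convex space equality in
`‖s • x + t • y - p‖ ≤ s * ‖x - p‖ + t * ‖y - p‖` (with `x ≠ y`, `s, t > 0`) forces `p` onto the
line through `x` and `y`. If `f` failed to be strictly convex between `x` and `y`, equality
would hold for `μ`-almost every `p`, so `μ` would be carried by the chord that this line cuts
out of the ball, i.e. by a segment with endpoints in the ball, against condition (*).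
Existence of the minimizer comes from compactness and the fact that `f` is `1`-Lipschitz,
uniqueness from strict convexity.
-/

open MeasureTheory Metric Set

theorem StrictConvexOn.existsUnique_isMinOn {E : Type*} [TopologicalSpace E] [AddCommGroup E]
    [Module ℝ E] {s : Set E} {f : E → ℝ}
    (hf : StrictConvexOn ℝ s f) (hs : IsCompact s) (hne : s.Nonempty) (hfc : ContinuousOn f s) :
    ∃! m, m ∈ s ∧ IsMinOn f s m := by
  obtain ⟨m, hm, hmin⟩ := hs.exists_isMinOn hne hfc
  exact ⟨m, ⟨hm, hmin⟩, fun m' hm' => hf.eq_of_isMinOn hm'.2 hmin hm'.1 hm⟩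

section Chord

variable {E : Type*} [NormedAddCommGroup E] [NormedSpace ℝ E]

theorem mem_affineSpan_pair_of_norm_sub_eq [StrictConvexSpace ℝ E] {x y p : E} (hxy : x ≠ y)
    {s t : ℝ} (hs : 0 < s) (ht : 0 < t) (hst : s + t = 1)
    (h : ‖s • x + t • y - p‖ = s * ‖x - p‖ + t * ‖y - p‖) : p ∈ line[ℝ, x, y] := by
  have hsplit : s • x + t • y - p = s • (x - p) + t • (y - p) := by
    calc s • x + t • y - p = s • x + t • y - (s + t) • p := by rw [hst, one_smul]
      _ = s • (x - p) + t • (y - p) := by module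
  have hray : SameRay ℝ (s • (x - p)) (t • (y - p)) := by
    rw [sameRay_iff_norm_add, ← hsplit, h, norm_smul, norm_smul, Real.norm_of_nonneg hs.le,
      Real.norm_of_nonneg ht.le]
  have hray' : SameRay ℝ (x - p) (y - p) := by
    simpa [smul_smul, hs.ne', ht.ne'] using
      (hray.pos_smul_left (inv_pos.mpr hs)).pos_smul_right (inv_pos.mpr ht)
  have hcol : Collinear ℝ ({p, x, y} : Set E) := by
    rcases wbtw_total_of_sameRay_vsub_left (x := p) (y := x) (z := y) hray' with hw | hw
    · exact hw.collinear
    · rw [Set.pair_comm]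
      exact hw.collinear
  exact hcol.mem_affineSpan_of_mem_of_ne (by simp) (by simp) (by simp) hxy

theorem IsCompact.exists_inter_affineSpan_pair_subset_segment {K : Set E} (hK : IsCompact K)
    {x y : E} (hx : x ∈ K) (hxy : x ≠ y) :
    ∃ u ∈ K, ∃ v ∈ K, K ∩ line[ℝ, x, y] ⊆ segment ℝ u v := by
  set L : ℝ →ᵃ[ℝ] E := AffineMap.lineMap x y
  have hL : AntilipschitzWith (nndist x y)⁻¹ L := AntilipschitzWith.of_le_mul_dist fun r r' => by
    rw [dist_lineMap_lineMap, NNReal.coe_inv, coe_nndist, mul_left_comm,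
      inv_mul_cancel₀ (dist_ne_zero.mpr hxy), mul_one]
  have hT : IsCompact (L ⁻¹' K) := isCompact_of_isClosed_isBounded
    (hK.isClosed.preimage AffineMap.lineMap_continuous) (hL.isBounded_preimage hK.isBounded)
  have hne : (L ⁻¹' K).Nonempty := ⟨0, by simpa [L] using hx⟩
  refine ⟨L (sInf (L ⁻¹' K)), hT.sInf_mem hne, L (sSup (L ⁻¹' K)), hT.sSup_mem hne, ?_⟩
  rintro _ ⟨hpK, hpl⟩
  obtain ⟨r, rfl⟩ := mem_affineSpan_pair_iff_exists_lineMap_eq.mp hpl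
  rw [← image_segment, segment_eq_Icc (csInf_le_csSup hne hT.bddBelow hT.bddAbove)]
  exact mem_image_of_mem L ⟨csInf_le hT.bddBelow hpK, le_csSup hT.bddAbove hpK⟩

end Chord

theorem integral_lt_integral_of_ae_le_of_measure_setOf_lt_ne_zero {α : Type*}
    [MeasurableSpace α] {ν : Measure α} {f g : α → ℝ} (hf : Integrable f ν) (hg : Integrable g ν)
    (hle : f ≤ᵐ[ν] g) (hlt : ν {x | f x < g x} ≠ 0) : ∫ x, f x ∂ν < ∫ x, g x ∂ν := by
  rw [← sub_pos, ← integral_sub hg hf, integral_pos_iff_support_of_nonneg_ae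
    (hle.mono fun x => sub_nonneg.2) (hg.sub hf)]
  exact pos_iff_ne_zero.2 (mt (measure_mono_null fun x hx => (sub_pos.2 hx).ne') hlt)

section Integral

variable {E : Type*} [NormedAddCommGroup E] [MeasurableSpace E] {μ : Measure E}

theorem integrable_norm_sub_of_ae_mem [OpensMeasurableSpace E] [IsFiniteMeasure μ] {s : Set E}
    (hs : Bornology.IsBounded s) (hae : ∀ᵐ p ∂μ, p ∈ s) (x : E) :
    Integrable (fun p => ‖x - p‖) μ := by
  obtain ⟨R, hR⟩ := hs.subset_closedBall x
  refine .of_bound (continuous_const.sub continuous_id).norm.aestronglyMeasurable R ?_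
  filter_upwards [hae] with p hp
  rw [norm_norm, ← dist_eq_norm]
  exact mem_closedBall'.mp (hR hp)

theorem lipschitzWith_integral_norm_sub [IsProbabilityMeasure μ]
    (hint : ∀ x, Integrable (fun p => ‖x - p‖) μ) :
    LipschitzWith 1 fun x => ∫ p, ‖x - p‖ ∂μ := by
  refine LipschitzWith.of_dist_le_mul fun w v => ?_
  rw [NNReal.coe_one, one_mul, dist_eq_norm, ← integral_sub (hint w) (hint v)]
  calc ‖∫ p, (‖w - p‖ - ‖v - p‖) ∂μ‖ ≤ dist w v * μ.real univ :=
        norm_integral_le_of_norm_le_const <| ae_of_all _ fun p => by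
          simpa [dist_eq_norm] using abs_norm_sub_norm_le (w - p) (v - p)
    _ = dist w v := by simp

variable [NormedSpace ℝ E]

theorem strictConvexOn_integral_norm_sub [StrictConvexSpace ℝ E] [OpensMeasurableSpace E]
    [IsProbabilityMeasure μ] {K : Set E} (hK : IsCompact K) (hKc : Convex ℝ K)
    (hae : ∀ᵐ p ∂μ, p ∈ K) (hseg : ∀ x ∈ K, ∀ y ∈ K, μ (segment ℝ x y) < 1) :
    StrictConvexOn ℝ K fun x => ∫ p, ‖x - p‖ ∂μ := by
  have hint := integrable_norm_sub_of_ae_mem hK.isBounded hae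
  refine ⟨hKc, fun x hx y hy hxy s t hs ht hst => ?_⟩
  obtain ⟨u, hu, v, hv, hsub⟩ := hK.exists_inter_affineSpan_pair_subset_segment hx hxy
  have hle (p : E) : ‖s • x + t • y - p‖ ≤ s * ‖x - p‖ + t * ‖y - p‖ := by
    simpa [dist_eq_norm] using (convexOn_univ_dist p).2 trivial trivial hs.le ht.le hst
  have hlt : μ {p | ‖s • x + t • y - p‖ < s * ‖x - p‖ + t * ‖y - p‖} ≠ 0 := by
    intro h0
    have hchord : ∀ᵐ p ∂μ, p ∈ segment ℝ u v := by
      filter_upwards [hae, measure_eq_zero_iff_ae_notMem.mp h0] with p hpK hp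
      exact hsub ⟨hpK, mem_affineSpan_pair_of_norm_sub_eq hxy hs ht hst ((hle p).eq_of_not_lt hp)⟩
    have hfull : μ univ ≤ μ (segment ℝ u v) := measure_mono_ae (hchord.mono fun p hp _ => hp)
    exact (measure_univ (μ := μ) ▸ hfull).not_gt (hseg u hu v hv)
  calc ∫ p, ‖s • x + t • y - p‖ ∂μ < ∫ p, (s * ‖x - p‖ + t * ‖y - p‖) ∂μ :=
        integral_lt_integral_of_ae_le_of_measure_setOf_lt_ne_zero (hint _)
          (((hint x).const_mul s).add ((hint y).const_mul t)) (ae_of_all _ hle) hlt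
    _ = s • ∫ p, ‖x - p‖ ∂μ + t • ∫ p, ‖y - p‖ ∂μ := by
        rw [integral_add ((hint x).const_mul s) ((hint y).const_mul t), integral_const_mul,
          integral_const_mul, smul_eq_mul, smul_eq_mul]

end Integral

theorem stmt5_general {n : ℕ} (a : EuclideanSpace ℝ (Fin n)) (ρ : ℝ) (hρ : 0 < ρ)
    (μ : Measure (EuclideanSpace ℝ (Fin n))) [IsProbabilityMeasure μ]
    (hsupp : {x : EuclideanSpace ℝ (Fin n) | ∀ U ∈ nhds x, 0 < μ U} ⊆ ball a ρ)
    (f : EuclideanSpace ℝ (Fin n) → ℝ)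
    (hf : ∀ x, f x = ∫ p, ‖x - p‖ ∂μ)
    (hstar : ∀ x ∈ closedBall a ρ, ∀ y ∈ closedBall a ρ, μ (segment ℝ x y) < 1) :
    StrictConvexOn ℝ (closedBall a ρ) f ∧
    ∃! m, m ∈ closedBall a ρ ∧ IsMinOn f (closedBall a ρ) m := by
  obtain rfl : f = fun x => ∫ p, ‖x - p‖ ∂μ := funext hf
  have hae : ∀ᵐ p ∂μ, p ∈ closedBall a ρ :=
    Filter.mem_of_superset μ.support_mem_ae fun p hp =>
      ball_subset_closedBall (hsupp ((μ.mem_support_iff_forall p).mp hp))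
  have hsc := strictConvexOn_integral_norm_sub (isCompact_closedBall a ρ) (convex_closedBall a ρ)
    hae hstar
  have hcont := (lipschitzWith_integral_norm_sub
    (integrable_norm_sub_of_ae_mem isBounded_closedBall hae)).continuous
  exact ⟨hsc, hsc.existsUnique_isMinOn (isCompact_closedBall a ρ)
    (nonempty_closedBall.mpr hρ.le) hcont.continuousOn⟩

/-- Euclidean case of Theorem 3.1, uniqueness of the median.
If the support of `μ` is not totally contained in any segment (condition (*)), then
`f` is strictly convex on `B̄(a,ρ)` and has a unique minimizer there. -/
theorem stmt5 {n : ℕ} (hn : 1 ≤ n) (a : EuclideanSpace ℝ (Fin n)) (ρ : ℝ) (hρ : 0 < ρ)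
    (μ : Measure (EuclideanSpace ℝ (Fin n))) [IsProbabilityMeasure μ]
    (hsupp : {x : EuclideanSpace ℝ (Fin n) | ∀ U ∈ nhds x, 0 < μ U} ⊆ ball a ρ)
    (f : EuclideanSpace ℝ (Fin n) → ℝ)
    (hf : ∀ x, f x = ∫ p, ‖x - p‖ ∂μ)
    (hstar : ∀ x ∈ closedBall a ρ, ∀ y ∈ closedBall a ρ, μ (segment ℝ x y) < 1) :
    StrictConvexOn ℝ (closedBall a ρ) f ∧
    ∃! m, m ∈ closedBall a ρ ∧ IsMinOn f (closedBall a ρ) m :=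
  stmt5_general a ρ hρ μ hsupp f hf hstar
end

section
/- If condition (*) holds, then there exist constants ε ∈ (0,ρ) and η ∈ (0,1] such that for every x, y ∈ B̄(a,ρ), μ({z ∈ B̄(a,ρ) : infDist(z, segment [x,y]) < ε}) ≤ 1 − η. -/
/-!
The segment `[x, y]` depends continuously on its endpoints: moving them by at most `r` keeps the
segment inside the closed `r`-thickening of the old one. Since the closed thickenings of the
compact segment `[x, y]` decrease to it, condition (*) gives a `δ > 0` with
`μ (cthickening δ [x, y]) < 1`, and this bound persists for the small thickenings of all nearby
segments. Compactness of `B̄(a,ρ) × B̄(a,ρ)` makes the bound uniform, with `ε = η = t` for one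
small `t > 0`.
-/

open MeasureTheory Metric Filter Topology

section

variable {E : Type*} [NormedAddCommGroup E] [NormedSpace ℝ E]

theorem isCompact_segment (x y : E) : IsCompact (segment ℝ x y) := by
  rw [segment_eq_image_lineMap]
  exact isCompact_Icc.image AffineMap.lineMap_continuous

theorem segment_subset_cthickening_segment {x y x' y' : E} {r : ℝ} (hx : dist x' x ≤ r)
    (hy : dist y' y ≤ r) : segment ℝ x' y' ⊆ cthickening r (segment ℝ x y) :=
  ((convex_segment x y).cthickening r).segment_subset
    (mem_cthickening_of_dist_le _ _ _ _ (left_mem_segment ℝ x y) hx)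
    (mem_cthickening_of_dist_le _ _ _ _ (right_mem_segment ℝ x y) hy)

variable [MeasurableSpace E] [OpensMeasurableSpace E] {μ : Measure E} [IsFiniteMeasure μ]

theorem eventually_measure_thickening_segment_le {p : E × E}
    (hp : μ (segment ℝ p.1 p.2) < 1) :
    ∀ᶠ z : ℝ × (E × E) in 𝓝 (0, p),
      μ (thickening z.1 (segment ℝ z.2.1 z.2.2)) ≤ ENNReal.ofReal (1 - z.1) := by
  obtain ⟨δ, hδ, hμδ⟩ : ∃ δ > 0, μ (cthickening δ (segment ℝ p.1 p.2)) < 1 :=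
    ((tendsto_measure_cthickening_of_isClosed ⟨1, one_pos, measure_ne_top μ _⟩
      (isCompact_segment p.1 p.2).isClosed).eventually (eventually_lt_nhds hp)).exists_gt
  have hlim : Tendsto (fun t : ℝ => ENNReal.ofReal (1 - t)) (𝓝 0) (𝓝 1) := by
    simpa using ENNReal.tendsto_ofReal
      ((tendsto_const_nhds (x := (1 : ℝ))).sub (tendsto_id (x := 𝓝 (0 : ℝ))))
  have hfst : ∀ᶠ z : ℝ × (E × E) in 𝓝 (0, p), z.1 < δ / 2 :=
    continuous_fst.continuousAt.eventually (eventually_lt_nhds (half_pos hδ))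
  have hsnd : ∀ᶠ z : ℝ × (E × E) in 𝓝 (0, p), z.2 ∈ ball p (δ / 2) :=
    continuous_snd.continuousAt.eventually_mem (ball_mem_nhds p (half_pos hδ))
  have hval : ∀ᶠ z : ℝ × (E × E) in 𝓝 (0, p),
      μ (cthickening δ (segment ℝ p.1 p.2)) < ENNReal.ofReal (1 - z.1) :=
    (continuous_fst.tendsto ((0 : ℝ), p)).eventually (hlim.eventually (eventually_gt_nhds hμδ))
  filter_upwards [hfst, hsnd, hval] with ⟨t, q⟩ ht hq hμ
  rw [mem_ball, Prod.dist_eq, max_lt_iff] at hq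
  have hseg : segment ℝ q.1 q.2 ⊆ cthickening (δ / 2) (segment ℝ p.1 p.2) :=
    segment_subset_cthickening_segment hq.1.le hq.2.le
  have hsub : thickening t (segment ℝ q.1 q.2) ⊆ cthickening δ (segment ℝ p.1 p.2) :=
    calc thickening t (segment ℝ q.1 q.2)
        ⊆ thickening (δ / 2) (cthickening (δ / 2) (segment ℝ p.1 p.2)) :=
          (thickening_mono ht.le _).trans (thickening_subset_of_subset _ hseg)
      _ ⊆ thickening (δ / 2 + δ / 2) (segment ℝ p.1 p.2) :=
          thickening_cthickening_subset _ (half_pos hδ).le _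
      _ ⊆ cthickening δ (segment ℝ p.1 p.2) :=
          thickening_subset_cthickening_of_le (add_halves δ).le _
  exact (measure_mono hsub).trans hμ.le

theorem eventually_forall_measure_thickening_segment_le {K : Set (E × E)} (hK : IsCompact K)
    (hμK : ∀ p ∈ K, μ (segment ℝ p.1 p.2) < 1) :
    ∀ᶠ t in 𝓝 (0 : ℝ), ∀ p ∈ K,
      μ (thickening t (segment ℝ p.1 p.2)) ≤ ENNReal.ofReal (1 - t) :=
  hK.eventually_forall_of_forall_eventually fun p hp =>
    eventually_measure_thickening_segment_le (hμK p hp)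

end

theorem stmt6_general {n : ℕ} (a : EuclideanSpace ℝ (Fin n)) (ρ : ℝ) (hρ : 0 < ρ)
    (μ : Measure (EuclideanSpace ℝ (Fin n))) [IsProbabilityMeasure μ]
    (hstar : ∀ x ∈ closedBall a ρ, ∀ y ∈ closedBall a ρ, μ (segment ℝ x y) < 1) :
    ∃ ε ∈ Set.Ioo (0 : ℝ) ρ, ∃ η ∈ Set.Ioc (0 : ℝ) 1,
      ∀ x ∈ closedBall a ρ, ∀ y ∈ closedBall a ρ,
        μ {z ∈ closedBall a ρ | infDist z (segment ℝ x y) < ε} ≤ ENNReal.ofReal (1 - η) := by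
  have hK := (isCompact_closedBall a ρ).prod (isCompact_closedBall a ρ)
  obtain ⟨t, ht, hsmall, hbound⟩ :=
    ((eventually_lt_nhds (lt_min hρ one_pos)).and
      (eventually_forall_measure_thickening_segment_le (μ := μ) hK
        fun p hp => hstar p.1 hp.1 p.2 hp.2)).exists_gt
  refine ⟨t, ⟨ht, hsmall.trans_le (min_le_left _ _)⟩, t,
    ⟨ht, (hsmall.trans_le (min_le_right _ _)).le⟩, fun x hx y hy => ?_⟩
  refine (measure_mono fun z hz => ?_).trans (hbound (x, y) ⟨hx, hy⟩)
  exact (mem_thickening_iff_infDist_lt ⟨x, left_mem_segment ℝ x y⟩).2 hz.2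

/-- Euclidean case of Lemma 3.2. If the support of `μ` is not totally
contained in any segment (condition (*)), then there are `ε ∈ (0,ρ)` and `η ∈ (0,1]`
such that every `ε`-neighborhood (inside `B̄(a,ρ)`) of a segment with endpoints in
`B̄(a,ρ)` has `μ`-measure at most `1 - η`. -/
theorem stmt6 {n : ℕ} (hn : 1 ≤ n) (a : EuclideanSpace ℝ (Fin n)) (ρ : ℝ) (hρ : 0 < ρ)
    (μ : Measure (EuclideanSpace ℝ (Fin n))) [IsProbabilityMeasure μ]
    (hsupp : {x : EuclideanSpace ℝ (Fin n) | ∀ U ∈ nhds x, 0 < μ U} ⊆ ball a ρ)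
    (hstar : ∀ x ∈ closedBall a ρ, ∀ y ∈ closedBall a ρ, μ (segment ℝ x y) < 1) :
    ∃ ε ∈ Set.Ioo (0 : ℝ) ρ, ∃ η ∈ Set.Ioc (0 : ℝ) 1,
      ∀ x ∈ closedBall a ρ, ∀ y ∈ closedBall a ρ,
        μ {z ∈ closedBall a ρ | infDist z (segment ℝ x y) < ε} ≤ ENNReal.ofReal (1 - η) :=
  stmt6_general a ρ hρ μ hstar
end

section
/- Let A₁, B₁, C₁ and A₂, B₂, C₂ be two triangles in E with pairwise distinct vertices such that ∠(B₁,A₁,C₁) ≤ ∠(B₂,A₂,C₂), ∠(A₁,B₁,C₁) ≤ π/2, dist(A₁,C₁) = dist(A₂,C₂) and dist(A₁,B₁) = dist(A₂,B₂). Then ∠(A₂,C₂,B₂) ≤ ∠(A₁,C₁,B₁). -/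
open EuclideanGeometry Real

private lemma stmt7_aux (b c a₁ a₂ x₁ x₂ y z₁ z₂ : ℝ)
    (hb : 0 < b) (hc : 0 < c) (h1 : 0 < a₁) (h2 : 0 < a₂)
    (eA₁ : a₁ * a₁ = c * c + b * b - 2 * c * b * x₁)
    (eA₂ : a₂ * a₂ = c * c + b * b - 2 * c * b * x₂)
    (hx : x₂ ≤ x₁)
    (eB : b * b = c * c + a₁ * a₁ - 2 * c * a₁ * y) (hy : 0 ≤ y)
    (eC₁ : c * c = b * b + a₁ * a₁ - 2 * b * a₁ * z₁)
    (eC₂ : c * c = b * b + a₂ * a₂ - 2 * b * a₂ * z₂) :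
    z₁ ≤ z₂ := by
  have hasq : a₁ * a₁ ≤ a₂ * a₂ := by
    nlinarith [mul_nonneg (mul_nonneg hc.le hb.le) (sub_nonneg.2 hx)]
  have ha : a₁ ≤ a₂ := by nlinarith
  have hkey : 0 ≤ a₁ * a₁ + c * c - b * b := by
    nlinarith [mul_nonneg (mul_nonneg hc.le h1.le) hy]
  have key2 : a₂ * (b * b + a₁ * a₁ - c * c) ≤ a₁ * (b * b + a₂ * a₂ - c * c) := by
    nlinarith [mul_nonneg (sub_nonneg.2 ha)
      (show (0:ℝ) ≤ a₁ * a₂ + c * c - b * b by nlinarith [mul_le_mul_of_nonneg_left ha h1.le])]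
  have l : a₂ * (2 * b * a₁ * z₁) ≤ a₁ * (2 * b * a₂ * z₂) := by nlinarith
  have hpos : (0:ℝ) < 2 * b * a₁ * a₂ := by positivity
  have l' : (2 * b * a₁ * a₂) * z₁ ≤ (2 * b * a₁ * a₂) * z₂ := by nlinarith
  exact le_of_mul_le_mul_left l' hpos

/-- flat model-space case of Lemma 3.3. If two Euclidean triangles
`A₁B₁C₁` and `A₂B₂C₂` satisfy `∠A₁ ≤ ∠A₂`, `∠B₁ ≤ π/2`, `d(A₁,C₁) = d(A₂,C₂)` and
`d(A₁,B₁) = d(A₂,B₂)`, then `∠C₂ ≤ ∠C₁`. -/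
theorem stmt7 {n : ℕ} (hn : 2 ≤ n)
    (A₁ B₁ C₁ A₂ B₂ C₂ : EuclideanSpace ℝ (Fin n))
    (h₁AB : A₁ ≠ B₁) (h₁AC : A₁ ≠ C₁) (h₁BC : B₁ ≠ C₁)
    (h₂AB : A₂ ≠ B₂) (h₂AC : A₂ ≠ C₂) (h₂BC : B₂ ≠ C₂)
    (hA : ∠ B₁ A₁ C₁ ≤ ∠ B₂ A₂ C₂)
    (hB : ∠ A₁ B₁ C₁ ≤ π / 2)
    (hAC : dist A₁ C₁ = dist A₂ C₂)
    (hAB : dist A₁ B₁ = dist A₂ B₂) :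
    ∠ A₂ C₂ B₂ ≤ ∠ A₁ C₁ B₁ := by
  have lA₁ := EuclideanGeometry.law_cos B₁ A₁ C₁
  have lA₂ := EuclideanGeometry.law_cos B₂ A₂ C₂
  have lB₁ := EuclideanGeometry.law_cos A₁ B₁ C₁
  have lC₁ := EuclideanGeometry.law_cos A₁ C₁ B₁
  have lC₂ := EuclideanGeometry.law_cos A₂ C₂ B₂
  rw [dist_comm B₁ A₁, dist_comm C₁ A₁] at lA₁
  rw [dist_comm B₂ A₂, dist_comm C₂ A₂, ← hAB, ← hAC] at lA₂
  rw [dist_comm C₁ B₁] at lB₁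
  rw [← hAB, ← hAC] at lC₂
  have hcosA : Real.cos (∠ B₂ A₂ C₂) ≤ Real.cos (∠ B₁ A₁ C₁) :=
    Real.cos_le_cos_of_nonneg_of_le_pi (angle_nonneg _ _ _) (angle_le_pi _ _ _) hA
  have hcosB : 0 ≤ Real.cos (∠ A₁ B₁ C₁) :=
    Real.cos_nonneg_of_mem_Icc ⟨by linarith [angle_nonneg A₁ B₁ C₁, Real.pi_pos], hB⟩
  have hcosC : Real.cos (∠ A₁ C₁ B₁) ≤ Real.cos (∠ A₂ C₂ B₂) :=
    stmt7_aux (dist A₁ C₁) (dist A₁ B₁) (dist B₁ C₁) (dist B₂ C₂)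
      (Real.cos (∠ B₁ A₁ C₁)) (Real.cos (∠ B₂ A₂ C₂)) (Real.cos (∠ A₁ B₁ C₁))
      (Real.cos (∠ A₁ C₁ B₁)) (Real.cos (∠ A₂ C₂ B₂))
      (dist_pos.2 h₁AC) (dist_pos.2 h₁AB) (dist_pos.2 h₁BC) (dist_pos.2 h₂BC)
      lA₁ lA₂ hcosA lB₁ hcosB lC₁ lC₂
  by_contra h
  push_neg at h
  exact absurd hcosC (not_le.2 (Real.cos_lt_cos_of_nonneg_of_le_pi
    (angle_nonneg _ _ _) (angle_le_pi _ _ _) h))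
end

section
/- Let A, B, C be pairwise distinct points of the closed ball B̄(a,ρ) such that the angle at A satisfies ∠(B,A,C) = π/2. Then sin ∠(A,C,B) ≥ dist(A,B)/(2√2·ρ). -/
open EuclideanGeometry Real Metric

/-- Euclidean case of Lemma 3.4, with `L(ρ,0) = 1/(2√2 ρ)`.
If `A, B, C` are pairwise distinct points of `B̄(a,ρ)` with a right angle at `A`,
then `sin ∠C ≥ d(A,B)/(2√2 ρ)`. -/
theorem stmt8 {n : ℕ} (hn : 2 ≤ n) (a : EuclideanSpace ℝ (Fin n)) (ρ : ℝ) (hρ : 0 < ρ)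
    (A B C : EuclideanSpace ℝ (Fin n))
    (hA : A ∈ closedBall a ρ) (hB : B ∈ closedBall a ρ) (hC : C ∈ closedBall a ρ)
    (hAB : A ≠ B) (hAC : A ≠ C) (hBC : B ≠ C)
    (hangle : ∠ B A C = π / 2) :
    Real.sin (∠ A C B) ≥ dist A B / (2 * Real.sqrt 2 * ρ) := by
  have hs := EuclideanGeometry.sin_angle_of_angle_eq_pi_div_two hangle (Or.inl hAB.symm)
  rw [dist_comm B A] at hs
  rw [ge_iff_le, hs]
  have hdBC : dist B C ≤ 2 * Real.sqrt 2 * ρ := by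
    calc dist B C ≤ dist B a + dist a C := dist_triangle _ _ _
    _ ≤ ρ + ρ := by
        have := mem_closedBall.mp hB
        have := mem_closedBall.mp hC
        rw [dist_comm B a] at *
        rw [dist_comm a C] at *
        linarith [mem_closedBall'.mp hB, mem_closedBall.mp hC]
    _ ≤ 2 * Real.sqrt 2 * ρ := by
        nlinarith [Real.le_sqrt' (by norm_num : (0:ℝ) < 1) |>.mpr (by norm_num : (1:ℝ)^2 ≤ 2)]
  have h0 : 0 < dist B C := dist_pos.mpr hBC
  gcongr
end

section
/- Let v ∈ E with v ≠ 0, x ∈ E, b > 0, and let γ(s) = x + s·v for s ∈ [0,b]. Let ν be the Borel measure on (0,b) given by ν = g·λ + 2‖v‖·μ_γ, where λ is Lebesgue measure on (0,b), g(s) = ∫_{p ∉ γ([0,b])} (‖v‖²·‖γ(s) − p‖² − ⟨v, γ(s) − p⟩²)/‖γ(s) − p‖³ dμ(p), and μ_γ is the measure on (0,b) defined by μ_γ(B) = μ(γ(B)) for Borel B ⊆ (0,b). Then for every t ∈ [0,b], f(x + t·v) = f(x) + (⟨v, H(x)⟩ + μ({x})·‖v‖)·t + ∫_{(0,t)} (t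 − s) dν(s). -/
/-!
Split `‖x + t • v - p‖ = ‖x - p‖ + t D_p + R_p(t)`, where `D_p` is the right derivative at `0` of
`s ↦ ‖x + s • v - p‖` and `R_p(t) ≥ 0` is the remainder. Integrating `D_p` over `p` gives
`⟪v, H x⟫ + μ {x} ‖v‖`, the atom at `x` contributing the right derivative `‖v‖` of `s ↦ ‖s • v‖`.
Off the segment `γ [0, b]` the distance to `p` is smooth along `γ`, and Taylor's formula gives
`R_p(t) = ∫₀ᵗ (t - s) Hess d_p (v, v) (γ s) ds`; at `p = γ s₀` the kink of the distance gives
`R_p(t) = 2 ‖v‖ (t - s₀)` if `0 < s₀ < t` and `R_p(t) = 0` otherwise. Integrating over `p` and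
exchanging the order of integration (Tonelli) turns `∫ R_p(t) dμ(p)` into `∫_{(0,t)} (t - s) dν(s)`.
-/

open MeasureTheory Metric Set Filter
open scoped RealInnerProductSpace ENNReal

section NormAlongLine

variable {E : Type*} [NormedAddCommGroup E] [InnerProductSpace ℝ E]

noncomputable def dirDerivNorm (v c : E) : ℝ := ⟪v, c⟫ / ‖c‖

-- `dirHessNorm v (q - p)` is the paper's `Hess d_p (v, v)` at `q`.
noncomputable def dirHessNorm (v c : E) : ℝ := (‖v‖ ^ 2 * ‖c‖ ^ 2 - ⟪v, c⟫ ^ 2) / ‖c‖ ^ 3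

open Classical in
noncomputable def rightDirDerivNorm (v c : E) : ℝ := if c = 0 then ‖v‖ else dirDerivNorm v c

noncomputable def taylorRemNorm (v c : E) (t : ℝ) : ℝ :=
  ‖c + t • v‖ - ‖c‖ - t * rightDirDerivNorm v c

lemma dirHessNorm_nonneg (v c : E) : 0 ≤ dirHessNorm v c := by
  have h := abs_real_inner_le_norm v c
  have : ⟪v, c⟫ ^ 2 ≤ (‖v‖ * ‖c‖) ^ 2 := by
    rw [← sq_abs]; exact pow_le_pow_left₀ (abs_nonneg _) h 2
  exact div_nonneg (by linarith) (by positivity)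

lemma abs_dirDerivNorm_le (v c : E) : |dirDerivNorm v c| ≤ ‖v‖ := by
  rw [dirDerivNorm, abs_div, abs_norm]
  exact div_le_of_le_mul₀ (norm_nonneg _) (norm_nonneg _) (abs_real_inner_le_norm v c)

lemma abs_rightDirDerivNorm_le (v c : E) : |rightDirDerivNorm v c| ≤ ‖v‖ := by
  unfold rightDirDerivNorm
  split_ifs
  · exact (abs_norm v).le
  · exact abs_dirDerivNorm_le v c

lemma hasDerivAt_norm_add_smul_s9 {v c : E} {s : ℝ} (h : c + s • v ≠ 0) :
    HasDerivAt (fun u : ℝ => ‖c + u • v‖) (dirDerivNorm v (c + s • v)) s := by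
  have hline : HasDerivAt (fun u : ℝ => c + u • v) v s := by
    simpa using ((hasDerivAt_id s).smul_const v).const_add c
  have hsq := hline.norm_sq.sqrt (by positivity)
  simp only [Real.sqrt_sq (norm_nonneg _)] at hsq
  convert hsq using 1
  rw [dirDerivNorm, real_inner_comm]
  field_simp

lemma hasDerivAt_dirDerivNorm_add_smul {v c : E} {s : ℝ} (h : c + s • v ≠ 0) :
    HasDerivAt (fun u : ℝ => dirDerivNorm v (c + u • v)) (dirHessNorm v (c + s • v)) s := by
  have hinner : HasDerivAt (fun u : ℝ => ⟪v, c + u • v⟫) (‖v‖ ^ 2) s := by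
    simpa [inner_add_right, real_inner_smul_right, real_inner_self_eq_norm_sq] using
      ((hasDerivAt_id s).mul_const (‖v‖ ^ 2)).const_add ⟪v, c⟫
  refine (hinner.div (hasDerivAt_norm_add_smul_s9 h) (norm_ne_zero_iff.mpr h)).congr_deriv ?_
  have hn : ‖c + s • v‖ ≠ 0 := norm_ne_zero_iff.mpr h
  rw [dirHessNorm, dirDerivNorm]
  field_simp

lemma continuousAt_dirHessNorm (v : E) {c : E} (h : c ≠ 0) : ContinuousAt (dirHessNorm v) c := by
  unfold dirHessNorm
  fun_prop (disch := exact pow_ne_zero _ (norm_ne_zero_iff.mpr h))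

lemma continuousOn_dirHessNorm_add_smul {v c : E} {t : ℝ} (hc : ∀ s ∈ Icc 0 t, c + s • v ≠ 0) :
    ContinuousOn (fun s : ℝ => dirHessNorm v (c + s • v)) (Icc 0 t) := fun s hs =>
  ((continuousAt_dirHessNorm v (hc s hs)).comp (f := fun s : ℝ => c + s • v)
    (by fun_prop)).continuousWithinAt

lemma rightDirDerivNorm_neg_smul_self (v : E) {s : ℝ} (hs : 0 < s) :
    rightDirDerivNorm v (-(s • v)) = -‖v‖ := by
  rcases eq_or_ne v 0 with rfl | hv
  · simp [rightDirDerivNorm]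
  have hsv : -(s • v) ≠ 0 := by simp [hs.ne', hv]
  rw [rightDirDerivNorm, if_neg hsv, dirDerivNorm, inner_neg_right, real_inner_smul_right,
    real_inner_self_eq_norm_sq, norm_neg, norm_smul, Real.norm_of_nonneg hs.le]
  field_simp

lemma taylorRemNorm_nonneg (v c : E) (t : ℝ) : 0 ≤ taylorRemNorm v c t := by
  rcases eq_or_ne c 0 with rfl | hc
  · simp only [taylorRemNorm, rightDirDerivNorm, if_pos, zero_add, norm_smul, norm_zero,
      Real.norm_eq_abs]
    nlinarith [le_abs_self t, norm_nonneg v]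
  -- `‖c‖ + t ⟪v, c⟫ / ‖c‖ = ⟪c + t • v, c⟫ / ‖c‖ ≤ ‖c + t • v‖` by Cauchy–Schwarz
  have hcn : 0 < ‖c‖ := norm_pos_iff.mpr hc
  have hcs := real_inner_le_norm (c + t • v) c
  rw [inner_add_left, real_inner_self_eq_norm_sq, real_inner_smul_left] at hcs
  have hmul : ‖c‖ * taylorRemNorm v c t = ‖c + t • v‖ * ‖c‖ - (‖c‖ ^ 2 + t * ⟪v, c⟫) := by
    rw [taylorRemNorm, rightDirDerivNorm, if_neg hc, dirDerivNorm]
    field_simp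
    ring
  exact le_of_mul_le_mul_left (by rw [mul_zero, hmul]; linarith) hcn

lemma taylorRemNorm_le (v c : E) (t : ℝ) : taylorRemNorm v c t ≤ 2 * |t| * ‖v‖ := by
  have h1 : ‖c + t • v‖ ≤ ‖c‖ + |t| * ‖v‖ := by
    simpa [norm_smul] using norm_add_le c (t • v)
  have h2 : -(t * rightDirDerivNorm v c) ≤ |t| * ‖v‖ := by
    calc -(t * rightDirDerivNorm v c) ≤ |t * rightDirDerivNorm v c| := neg_le_abs _
      _ ≤ |t| * ‖v‖ := by
        rw [abs_mul]; exact mul_le_mul_of_nonneg_left (abs_rightDirDerivNorm_le v c) (abs_nonneg t)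
  rw [taylorRemNorm]
  linarith

lemma taylorRemNorm_neg_smul_self (v : E) {s t : ℝ} (hs : 0 ≤ s) (ht : 0 ≤ t) :
    taylorRemNorm v (-(s • v)) t = (Ioo 0 t).indicator (fun s => 2 * ‖v‖ * (t - s)) s := by
  rcases hs.eq_or_lt with rfl | hs
  · simp [taylorRemNorm, rightDirDerivNorm, norm_smul, abs_of_nonneg ht]
  have hline : -(s • v) + t • v = (t - s) • v := by rw [sub_smul]; abel
  rw [taylorRemNorm, rightDirDerivNorm_neg_smul_self v hs, hline, norm_neg, norm_smul, norm_smul,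
    Real.norm_of_nonneg hs.le, Real.norm_eq_abs]
  by_cases hst : s < t
  · rw [indicator_of_mem (show s ∈ Ioo 0 t from ⟨hs, hst⟩), abs_of_pos (sub_pos.mpr hst)]
    ring
  · rw [indicator_of_notMem fun h => hst h.2, abs_of_nonpos (by linarith)]
    ring

lemma lintegral_Ioo_ofReal_eq_sub {F F' : ℝ → ℝ} {t : ℝ} (ht : 0 ≤ t)
    (hF : ∀ s ∈ Icc 0 t, HasDerivAt F (F' s) s) (hF' : ContinuousOn F' (Icc 0 t))
    (hF'0 : ∀ s ∈ Icc 0 t, 0 ≤ F' s) :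
    ∫⁻ s in Ioo 0 t, ENNReal.ofReal (F' s) = ENNReal.ofReal (F t - F 0) := by
  have hint : IntegrableOn F' (Ioo 0 t) := hF'.integrableOn_Icc.mono_set Ioo_subset_Icc_self
  have hnn : 0 ≤ᵐ[volume.restrict (Ioo 0 t)] F' :=
    (ae_restrict_iff' measurableSet_Ioo).mpr
      (.of_forall fun s hs => hF'0 s (Ioo_subset_Icc_self hs))
  rw [← ofReal_integral_eq_lintegral_ofReal hint hnn, ← integral_Ioc_eq_integral_Ioo,
    ← intervalIntegral.integral_of_le ht, intervalIntegral.integral_eq_sub_of_hasDerivAt]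
  · rwa [uIcc_of_le ht]
  · exact hF'.intervalIntegrable_of_Icc ht

lemma lintegral_Ioo_dirHessNorm_le {v c : E} {t : ℝ} (ht : 0 ≤ t)
    (hc : ∀ s ∈ Icc 0 t, c + s • v ≠ 0) :
    ∫⁻ s in Ioo 0 t, ENNReal.ofReal (dirHessNorm v (c + s • v)) ≤ ENNReal.ofReal (2 * ‖v‖) := by
  rw [lintegral_Ioo_ofReal_eq_sub ht (fun s hs => hasDerivAt_dirDerivNorm_add_smul (hc s hs))
    (continuousOn_dirHessNorm_add_smul hc) (fun s _ => dirHessNorm_nonneg _ _)]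
  have h1 := abs_le.mp (abs_dirDerivNorm_le v (c + t • v))
  have h2 := abs_le.mp (abs_dirDerivNorm_le v (c + (0 : ℝ) • v))
  exact ENNReal.ofReal_le_ofReal (by linarith)

lemma lintegral_Ioo_mul_dirHessNorm {v c : E} {t : ℝ} (ht : 0 ≤ t)
    (hc : ∀ s ∈ Icc 0 t, c + s • v ≠ 0) :
    ∫⁻ s in Ioo 0 t, ENNReal.ofReal ((t - s) * dirHessNorm v (c + s • v)) =
      ENNReal.ofReal (taylorRemNorm v c t) := by
  have hderiv : ∀ s ∈ Icc 0 t, HasDerivAt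
      (fun u => (t - u) * dirDerivNorm v (c + u • v) + ‖c + u • v‖)
      ((t - s) * dirHessNorm v (c + s • v)) s := fun s hs => by
    refine ((((hasDerivAt_id' s).const_sub t).mul (hasDerivAt_dirDerivNorm_add_smul (hc s hs))).add
      (hasDerivAt_norm_add_smul_s9 (hc s hs))).congr_deriv ?_
    ring
  rw [lintegral_Ioo_ofReal_eq_sub ht hderiv
    ((continuousOn_const.sub continuousOn_id).mul (continuousOn_dirHessNorm_add_smul hc))
    (fun s hs => mul_nonneg (sub_nonneg.mpr hs.2) (dirHessNorm_nonneg _ _))]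
  have hc0 : c ≠ 0 := by simpa using hc 0 ⟨le_rfl, ht⟩
  rw [taylorRemNorm, rightDirDerivNorm, if_neg hc0, zero_smul, add_zero, sub_self, zero_mul,
    zero_add, sub_zero]
  congr 1
  ring

end NormAlongLine

lemma ae_ofReal_integral_eq_lintegral {α β : Type*} [MeasurableSpace α] [MeasurableSpace β]
    {ν : Measure α} {μ : Measure β} [SFinite ν] [SFinite μ] {K : α → β → ℝ}
    (hK : Measurable (Function.uncurry K)) (hK0 : ∀ s p, 0 ≤ K s p)
    (hfin : ∫⁻ p, ∫⁻ s, ENNReal.ofReal (K s p) ∂ν ∂μ ≠ ∞) :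
    ∀ᵐ s ∂ν, ENNReal.ofReal (∫ p, K s p ∂μ) = ∫⁻ p, ENNReal.ofReal (K s p) ∂μ := by
  have hKe : Measurable (Function.uncurry fun s p => ENNReal.ofReal (K s p)) := hK.ennreal_ofReal
  have hL : Measurable fun s => ∫⁻ p, ENNReal.ofReal (K s p) ∂μ := hKe.lintegral_prod_right'
  filter_upwards [ae_lt_top hL (by rwa [lintegral_lintegral_swap hKe.aemeasurable])] with s hs
  rw [integral_eq_lintegral_of_nonneg_ae (.of_forall (hK0 s))
    (hK.comp measurable_prodMk_left).aestronglyMeasurable, ENNReal.ofReal_toReal hs.ne]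

lemma MeasurableEmbedding.setLIntegral_comap {α β : Type*} [MeasurableSpace α] [MeasurableSpace β]
    {f : α → β} (hf : MeasurableEmbedding f) (μ : Measure β) (F : β → ℝ≥0∞) (s : Set α) :
    ∫⁻ a in s, F (f a) ∂μ.comap f = ∫⁻ b in f '' s, F b ∂μ := by
  rw [hf.restrict_comap, ← hf.lintegral_map, hf.map_comap,
    Measure.restrict_restrict hf.measurableSet_range, inter_eq_right.mpr (image_subset_range f s)]

lemma integrable_norm_sub_of_support_subset_ball {E : Type*} [NormedAddCommGroup E]
    [MeasurableSpace E] [BorelSpace E] [HereditarilyLindelofSpace E] (μ : Measure E)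
    [IsFiniteMeasure μ] {a : E} {ρ : ℝ}
    (hμ : μ.support ⊆ ball a ρ) (y : E) : Integrable (fun p => ‖y - p‖) μ := by
  refine .of_bound (by fun_prop) (‖y - a‖ + ρ) ?_
  filter_upwards [Measure.support_mem_ae (μ := μ)] with p hp
  have := mem_ball'.mp (hμ hp)
  rw [norm_norm]
  calc ‖y - p‖ ≤ ‖y - a‖ + ‖a - p‖ := norm_sub_le_norm_sub_add_norm_sub y a p
    _ ≤ ‖y - a‖ + ρ := by gcongr; exact (dist_eq_norm a p ▸ this).le

section Integrals

variable {E : Type*} [NormedAddCommGroup E] [InnerProductSpace ℝ E] [MeasurableSpace E]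
  [BorelSpace E] [SecondCountableTopology E]

lemma measurable_dirHessNorm (v : E) : Measurable (dirHessNorm v) := by
  unfold dirHessNorm
  fun_prop

lemma measurable_rightDirDerivNorm (v : E) : Measurable (rightDirDerivNorm v) := by
  unfold rightDirDerivNorm dirDerivNorm
  exact Measurable.ite (measurableSet_singleton 0) measurable_const (by fun_prop)

lemma measurable_taylorRemNorm (v : E) (t : ℝ) : Measurable fun c => taylorRemNorm v c t := by
  unfold taylorRemNorm
  exact (by fun_prop : Continuous fun c : E => ‖c + t • v‖ - ‖c‖).measurable.sub
    (measurable_const.mul (measurable_rightDirDerivNorm v))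

variable (μ : Measure E) [IsFiniteMeasure μ]

lemma integrable_rightDirDerivNorm_sub (x v : E) :
    Integrable (fun p => rightDirDerivNorm v (x - p)) μ :=
  .of_bound ((measurable_rightDirDerivNorm v).comp (by fun_prop)).aestronglyMeasurable ‖v‖
    (.of_forall fun p => abs_rightDirDerivNorm_le v (x - p))

lemma integrable_taylorRemNorm_sub (x v : E) (t : ℝ) :
    Integrable (fun p => taylorRemNorm v (x - p) t) μ :=
  .of_bound ((measurable_taylorRemNorm v t).comp (by fun_prop)).aestronglyMeasurable (2 * |t| * ‖v‖)
    (.of_forall fun p => by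
      rw [Real.norm_of_nonneg (taylorRemNorm_nonneg _ _ _)]; exact taylorRemNorm_le _ _ _)

lemma integral_rightDirDerivNorm_sub [CompleteSpace E] (x v : E) :
    ∫ p, rightDirDerivNorm v (x - p) ∂μ =
      ⟪v, ∫ p in ({x}ᶜ : Set E), ‖x - p‖⁻¹ • (x - p) ∂μ⟫ + (μ {x}).toReal * ‖v‖ := by
  have hunit : Integrable (fun p => ‖x - p‖⁻¹ • (x - p)) (μ.restrict {x}ᶜ) :=
    .of_bound (by fun_prop : Measurable fun p : E => ‖x - p‖⁻¹ • (x - p)).aestronglyMeasurable 1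
      (.of_forall fun p => by
        rcases eq_or_ne (x - p) 0 with h | h
        · simp [h]
        · rw [norm_smul, norm_inv, norm_norm, inv_mul_cancel₀ (norm_ne_zero_iff.mpr h)])
  rw [← integral_add_compl (measurableSet_singleton x) (integrable_rightDirDerivNorm_sub μ x v),
    ← integral_inner hunit, add_comm, integral_singleton]
  congr 1
  · refine setIntegral_congr_fun (measurableSet_singleton x).compl fun p hp => ?_
    rw [rightDirDerivNorm, if_neg (sub_ne_zero.mpr (Ne.symm hp)), dirDerivNorm,
      real_inner_smul_right, div_eq_inv_mul]
  · simp [rightDirDerivNorm, Measure.real]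

lemma integral_norm_add_smul_sub {x : E} (hint : Integrable (fun p => ‖x - p‖) μ) (v : E) (t : ℝ) :
    ∫ p, ‖x + t • v - p‖ ∂μ = ∫ p, ‖x - p‖ ∂μ + t * ∫ p, rightDirDerivNorm v (x - p) ∂μ +
      ∫ p, taylorRemNorm v (x - p) t ∂μ := by
  have hD := (integrable_rightDirDerivNorm_sub μ x v).const_mul t
  calc ∫ p, ‖x + t • v - p‖ ∂μ
      = ∫ p, ‖x - p‖ + t * rightDirDerivNorm v (x - p) + taylorRemNorm v (x - p) t ∂μ := by
        congr 1 with p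
        rw [taylorRemNorm, add_sub_right_comm]
        ring
    _ = _ := by
      rw [integral_add (f := fun p => ‖x - p‖ + t * rightDirDerivNorm v (x - p)) (hint.add hD)
        (integrable_taylorRemNorm_sub μ x v t), integral_add hint hD, integral_const_mul]

end Integrals

lemma sub_add_smul_ne_zero {E : Type*} [AddCommGroup E] [Module ℝ E] {x v p : E} {b : ℝ}
    (hp : p ∉ (fun s : ℝ => x + s • v) '' Icc 0 b) {s : ℝ}
    (hs : s ∈ Icc 0 b) : x - p + s • v ≠ 0 := fun h =>
  hp ⟨s, hs, by rw [← sub_eq_zero, ← h, add_sub_right_comm]⟩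

lemma measurableEmbedding_add_smul {E : Type*} [NormedAddCommGroup E] [NormedSpace ℝ E]
    [MeasurableSpace E] [BorelSpace E] (x : E) {v : E} (hv : v ≠ 0) :
    MeasurableEmbedding fun s : ℝ => x + s • v :=
  ((Homeomorph.addLeft x).isClosedEmbedding.comp
    (isClosedEmbedding_smul_left hv)).measurableEmbedding

section Segment

variable {E : Type*} [NormedAddCommGroup E] [InnerProductSpace ℝ E] [MeasurableSpace E]
  [BorelSpace E] (μ : Measure E) {x v : E} {b t : ℝ}

lemma measurable_dirHessNorm_add_smul_sub [SecondCountableTopology E] (x v : E) :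
    Measurable (Function.uncurry fun (s : ℝ) (p : E) => dirHessNorm v (x + s • v - p)) :=
  (measurable_dirHessNorm v).comp (by fun_prop)

lemma lintegral_taylorRemNorm_segment (hv : v ≠ 0) (ht : 0 ≤ t) (htb : t ≤ b) :
    ∫⁻ p in (fun s : ℝ => x + s • v) '' Icc 0 b, ENNReal.ofReal (taylorRemNorm v (x - p) t) ∂μ =
      ENNReal.ofReal (2 * ‖v‖) *
        ∫⁻ s in Ioo 0 t, ENNReal.ofReal (t - s) ∂μ.comap fun s => x + s • v := by
  have hpt : ∀ s ∈ Icc 0 b, ENNReal.ofReal (taylorRemNorm v (x - (x + s • v)) t) =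
      (Ioo 0 t).indicator (fun s => ENNReal.ofReal (2 * ‖v‖) * ENNReal.ofReal (t - s)) s := by
    intro s hs
    rw [sub_add_cancel_left, taylorRemNorm_neg_smul_self v hs.1 ht]
    by_cases h : s ∈ Ioo 0 t
    · rw [indicator_of_mem h, indicator_of_mem h, ENNReal.ofReal_mul (by positivity)]
    · rw [indicator_of_notMem h, indicator_of_notMem h, ENNReal.ofReal_zero]
  rw [← (measurableEmbedding_add_smul x hv).setLIntegral_comap,
    setLIntegral_congr_fun measurableSet_Icc hpt,
    lintegral_indicator measurableSet_Ioo, Measure.restrict_restrict measurableSet_Ioo,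
    inter_eq_left.mpr (Ioo_subset_Icc_self.trans (Icc_subset_Icc_right htb)),
    lintegral_const_mul' _ _ ENNReal.ofReal_ne_top]

lemma lintegral_mul_ofReal_integral_dirHessNorm [SecondCountableTopology E] [IsFiniteMeasure μ]
    (ht : 0 ≤ t) (htb : t ≤ b) :
    ∫⁻ s in Ioo 0 t, ENNReal.ofReal (t - s) * ENNReal.ofReal
        (∫ p in ((fun s : ℝ => x + s • v) '' Icc 0 b)ᶜ, dirHessNorm v (x + s • v - p) ∂μ) =
      ∫⁻ p in ((fun s : ℝ => x + s • v) '' Icc 0 b)ᶜ,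
        ENNReal.ofReal (taylorRemNorm v (x - p) t) ∂μ := by
  set A := (fun s : ℝ => x + s • v) '' Icc 0 b
  have hA : MeasurableSet A := (isCompact_Icc.image (by fun_prop)).isClosed.measurableSet
  have hK := measurable_dirHessNorm_add_smul_sub x v
  -- the density is finite a.e. since its total mass is at most `2 ‖v‖ μ Aᶜ`
  have hfin :
      ∫⁻ p in Aᶜ, (∫⁻ s in Ioo 0 b, ENNReal.ofReal (dirHessNorm v (x + s • v - p))) ∂μ ≠ ∞ := by
    refine ne_top_of_le_ne_top (b := ∫⁻ _ in Aᶜ, ENNReal.ofReal (2 * ‖v‖) ∂μ)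
      (by simp [lintegral_const, ENNReal.mul_eq_top, measure_ne_top])
      (setLIntegral_mono measurable_const fun p hp => ?_)
    simp_rw [add_sub_right_comm]
    exact lintegral_Ioo_dirHessNorm_le (ht.trans htb) fun s hs => sub_add_smul_ne_zero hp hs
  have hae := (ae_restrict_iff' measurableSet_Ioo).mp
    (ae_ofReal_integral_eq_lintegral hK (fun _ _ => dirHessNorm_nonneg _ _) hfin)
  calc ∫⁻ s in Ioo 0 t, ENNReal.ofReal (t - s) *
        ENNReal.ofReal (∫ p in Aᶜ, dirHessNorm v (x + s • v - p) ∂μ)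
      = ∫⁻ s in Ioo 0 t, ∫⁻ p in Aᶜ,
          ENNReal.ofReal ((t - s) * dirHessNorm v (x + s • v - p)) ∂μ := by
        refine setLIntegral_congr_fun_ae measurableSet_Ioo ?_
        filter_upwards [hae] with s hs hst
        rw [hs (Ioo_subset_Ioo_right htb hst), ← lintegral_const_mul' _ _ ENNReal.ofReal_ne_top]
        simp_rw [ENNReal.ofReal_mul (sub_nonneg.mpr hst.2.le)]
    _ = ∫⁻ p in Aᶜ,
          (∫⁻ s in Ioo 0 t, ENNReal.ofReal ((t - s) * dirHessNorm v (x + s • v - p))) ∂μ :=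
        lintegral_lintegral_swap
          ((measurable_const.sub measurable_fst).mul hK).ennreal_ofReal.aemeasurable
    _ = ∫⁻ p in Aᶜ, ENNReal.ofReal (taylorRemNorm v (x - p) t) ∂μ := by
        refine setLIntegral_congr_fun hA.compl fun p hp => ?_
        simp_rw [add_sub_right_comm]
        exact lintegral_Ioo_mul_dirHessNorm ht fun s hs =>
          sub_add_smul_ne_zero hp ⟨hs.1, hs.2.trans htb⟩

lemma setIntegral_Ioo_sub_eq_integral_taylorRemNorm [SecondCountableTopology E]
    [IsFiniteMeasure μ] (hv : v ≠ 0) {g : ℝ → ℝ}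
    (hg : ∀ s, g s =
      ∫ p in ((fun s : ℝ => x + s • v) '' Icc 0 b)ᶜ, dirHessNorm v (x + s • v - p) ∂μ)
    {ν : Measure ℝ} (hν : ∀ B : Set ℝ, MeasurableSet B →
      ν B = (∫⁻ s in B ∩ Ioo 0 b, ENNReal.ofReal (g s)) +
        ENNReal.ofReal (2 * ‖v‖) * μ ((fun s : ℝ => x + s • v) '' (B ∩ Ioo 0 b)))
    (ht : 0 ≤ t) (htb : t ≤ b) :
    ∫ s in Ioo 0 t, (t - s) ∂ν = ∫ p, taylorRemNorm v (x - p) t ∂μ := by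
  have hemb := measurableEmbedding_add_smul x hv
  have hνeq : ν = (volume.restrict (Ioo 0 b)).withDensity (fun s => ENNReal.ofReal (g s)) +
      ENNReal.ofReal (2 * ‖v‖) • (μ.comap fun s : ℝ => x + s • v).restrict (Ioo 0 b) := by
    ext B hB
    rw [hν B hB, Measure.add_apply, withDensity_apply _ hB, Measure.restrict_restrict hB,
      Measure.smul_apply, Measure.restrict_apply hB, hemb.comap_apply, smul_eq_mul]
  have hgm : Measurable g := by
    rw [funext hg]
    exact (measurable_dirHessNorm_add_smul_sub x v).stronglyMeasurable
      |>.integral_prod_right' |>.measurable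
  have hA : MeasurableSet ((fun s : ℝ => x + s • v) '' Icc 0 b) :=
    (isCompact_Icc.image (by fun_prop)).isClosed.measurableSet
  have hIoo : Ioo 0 t ⊆ Ioo 0 b := Ioo_subset_Ioo_right htb
  rw [integral_eq_lintegral_of_nonneg_ae ((ae_restrict_iff' measurableSet_Ioo).mpr
      (.of_forall fun s hs => sub_nonneg.mpr hs.2.le)) (by fun_prop),
    integral_eq_lintegral_of_nonneg_ae (.of_forall fun p => taylorRemNorm_nonneg _ _ _)
      ((measurable_taylorRemNorm v t).comp (by fun_prop)).aestronglyMeasurable,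
    ← lintegral_add_compl _ hA, lintegral_taylorRemNorm_segment μ hv ht htb,
    ← lintegral_mul_ofReal_integral_dirHessNorm μ ht htb, hνeq, Measure.restrict_add,
    lintegral_add_measure, restrict_withDensity measurableSet_Ioo,
    lintegral_withDensity_eq_lintegral_mul _ hgm.ennreal_ofReal (by fun_prop),
    Measure.restrict_restrict measurableSet_Ioo, inter_eq_left.mpr hIoo, Measure.restrict_smul,
    lintegral_smul_measure, Measure.restrict_restrict measurableSet_Ioo, inter_eq_left.mpr hIoo,
    add_comm]
  congr 3 with s
  rw [Pi.mul_apply, hg, mul_comm]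

end Segment

theorem stmt9_general {n : ℕ} (a : EuclideanSpace ℝ (Fin n)) (ρ : ℝ)
    (μ : Measure (EuclideanSpace ℝ (Fin n))) [IsProbabilityMeasure μ]
    (hsupp : {x : EuclideanSpace ℝ (Fin n) | ∀ U ∈ nhds x, 0 < μ U} ⊆ ball a ρ)
    (f : EuclideanSpace ℝ (Fin n) → ℝ)
    (hf : ∀ x, f x = ∫ p, ‖x - p‖ ∂μ)
    (H : EuclideanSpace ℝ (Fin n) → EuclideanSpace ℝ (Fin n))
    (hH : ∀ x, H x = ∫ p in ({x}ᶜ : Set (EuclideanSpace ℝ (Fin n))), ‖x - p‖⁻¹ • (x - p) ∂μ)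
    (x v : EuclideanSpace ℝ (Fin n)) (hv : v ≠ 0) (b : ℝ)
    (γ : ℝ → EuclideanSpace ℝ (Fin n)) (hγ : ∀ s, γ s = x + s • v)
    (g : ℝ → ℝ)
    (hg : ∀ s, g s = ∫ p in (γ '' Set.Icc 0 b)ᶜ,
      (‖v‖ ^ 2 * ‖γ s - p‖ ^ 2 - ⟪v, γ s - p⟫ ^ 2) / ‖γ s - p‖ ^ 3 ∂μ)
    (ν : Measure ℝ)
    (hν : ∀ B : Set ℝ, MeasurableSet B →
      ν B = (∫⁻ s in B ∩ Set.Ioo 0 b, ENNReal.ofReal (g s)) +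
        ENNReal.ofReal (2 * ‖v‖) * μ (γ '' (B ∩ Set.Ioo 0 b))) :
    ∀ t ∈ Set.Icc (0 : ℝ) b,
      f (x + t • v) = f x + (⟪v, H x⟫ + (μ {x}).toReal * ‖v‖) * t +
        ∫ s in Set.Ioo (0 : ℝ) t, (t - s) ∂ν := by
  obtain rfl : γ = fun s => x + s • v := funext hγ
  rintro t ⟨ht0, htb⟩
  have hint := integrable_norm_sub_of_support_subset_ball μ
    (fun p hp => hsupp ((Measure.mem_support_iff_forall p).mp hp)) x
  rw [hf, hf, integral_norm_add_smul_sub μ hint, integral_rightDirDerivNorm_sub, ← hH,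
    setIntegral_Ioo_sub_eq_integral_taylorRemNorm μ hv hg hν ht0 htb]
  ring

/-- Euclidean case of Proposition 3.5, Taylor formula along a geodesic.
Let `γ(s) = x + s v` (`v ≠ 0`) on `[0,b]`, and let `ν` be the measure on `(0,b)` given by
`ν = g·λ + 2‖v‖·μ∘γ`, where `g(s) = ∫_{p ∉ γ[0,b]} Hess d_p(v,v) dμ(p)` with
`Hess d_p(v,v) = (‖v‖²‖γ(s)-p‖² - ⟪v, γ(s)-p⟫²)/‖γ(s)-p‖³`.  Then for `t ∈ [0,b]`,
`f(γ(t)) = f(x) + (⟪v, H x⟫ + μ{x}‖v‖)·t + ∫_{(0,t)} (t-s) dν(s)`. -/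
theorem stmt9 {n : ℕ} (hn : 1 ≤ n) (a : EuclideanSpace ℝ (Fin n)) (ρ : ℝ) (hρ : 0 < ρ)
    (μ : Measure (EuclideanSpace ℝ (Fin n))) [IsProbabilityMeasure μ]
    (hsupp : {x : EuclideanSpace ℝ (Fin n) | ∀ U ∈ nhds x, 0 < μ U} ⊆ ball a ρ)
    (f : EuclideanSpace ℝ (Fin n) → ℝ)
    (hf : ∀ x, f x = ∫ p, ‖x - p‖ ∂μ)
    (H : EuclideanSpace ℝ (Fin n) → EuclideanSpace ℝ (Fin n))
    (hH : ∀ x, H x = ∫ p in ({x}ᶜ : Set (EuclideanSpace ℝ (Fin n))), ‖x - p‖⁻¹ • (x - p) ∂μ)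
    (x v : EuclideanSpace ℝ (Fin n)) (hv : v ≠ 0) (b : ℝ) (hb : 0 < b)
    (γ : ℝ → EuclideanSpace ℝ (Fin n)) (hγ : ∀ s, γ s = x + s • v)
    (g : ℝ → ℝ)
    (hg : ∀ s, g s = ∫ p in (γ '' Set.Icc 0 b)ᶜ,
      (‖v‖ ^ 2 * ‖γ s - p‖ ^ 2 - ⟪v, γ s - p⟫ ^ 2) / ‖γ s - p‖ ^ 3 ∂μ)
    (ν : Measure ℝ)
    (hν : ∀ B : Set ℝ, MeasurableSet B →
      ν B = (∫⁻ s in B ∩ Set.Ioo 0 b, ENNReal.ofReal (g s)) +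
        ENNReal.ofReal (2 * ‖v‖) * μ (γ '' (B ∩ Set.Ioo 0 b))) :
    ∀ t ∈ Set.Icc (0 : ℝ) b,
      f (x + t • v) = f x + (⟪v, H x⟫ + (μ {x}).toReal * ‖v‖) * t +
        ∫ s in Set.Ioo (0 : ℝ) t, (t - s) ∂ν :=
  stmt9_general a ρ μ hsupp f hf H hH x v hv b γ hγ g hg ν hν
end

section
/- Set σ = sup{‖p − a‖ : p ∈ supp μ} (so σ < ρ). For every x ∈ B̄(a,ρ) with H(x) ≠ 0 and σ < ‖x − a‖, the exit time r_x = sup{t ∈ [0,2ρ] : x − t·H(x)/‖H(x)‖ ∈ B̄(a,ρ)} satisfies r_x ≥ 2‖x − a‖·(‖x − a‖ − σ)/(‖x − a‖ + σ). -/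
/-!
For `p` in the support of `μ`, the unit vector from `p` to `x` makes an inner product at least
`c = R (R - σ) / (R + σ)` with `x - a`, where `R = ‖x - a‖`: the numerator `⟪x - a, x - p⟫` is at
least `R (R - σ)` and the denominator `‖x - p‖` at most `R + σ`. Averaging over `μ` (which gives no
mass to `x`, as `x` lies outside the support) yields `c ‖H x‖ ≤ c ≤ ⟪x - a, H x⟫`. Expanding
`‖(x - a) - t u‖²` for the unit vector `u = H x / ‖H x‖` then shows that `x - t u` stays in the
ball `B̄(a, ‖x - a‖) ⊆ B̄(a, ρ)` for `0 ≤ t ≤ 2c`, and `2c ≤ 2ρ`.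
-/

open MeasureTheory Metric
open scoped RealInnerProductSpace

section InnerProductSpace

variable {E : Type*} [NormedAddCommGroup E] [InnerProductSpace ℝ E]

lemma norm_inv_norm_smul_le_one_s15 (v : E) : ‖‖v‖⁻¹ • v‖ ≤ 1 := by
  rcases eq_or_ne v 0 with rfl | hv
  · simp
  · exact (norm_smul_inv_norm hv).le

lemma le_inner_inv_norm_smul_sub {a p x : E} {σ : ℝ} (hp : ‖p - a‖ ≤ σ) (hx : σ < ‖x - a‖) :
    ‖x - a‖ * (‖x - a‖ - σ) / (‖x - a‖ + σ) ≤ ⟪x - a, ‖x - p‖⁻¹ • (x - p)⟫ := by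
  have hσ : 0 ≤ σ := (norm_nonneg _).trans hp
  have hxp : x - p = (x - a) - (p - a) := by abel
  have hdist_pos : 0 < ‖x - p‖ := by
    rw [norm_pos_iff, hxp, sub_ne_zero]
    rintro h
    rw [h] at hx
    exact hx.not_ge hp
  set R := ‖x - a‖
  have hdist_le : ‖x - p‖ ≤ R + σ := hxp ▸ (norm_sub_le _ _).trans (by linarith)
  have hnum : R * (R - σ) ≤ ⟪x - a, x - p⟫ := by
    have hcs : ⟪x - a, p - a⟫ ≤ R * σ :=
      (real_inner_le_norm _ _).trans (mul_le_mul_of_nonneg_left hp (norm_nonneg _))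
    rw [hxp, inner_sub_right, real_inner_self_eq_norm_sq]
    linarith
  rw [real_inner_smul_right, inv_mul_eq_div]
  exact div_le_div₀ (hnum.trans' (by nlinarith)) hnum hdist_pos hdist_le

lemma norm_sub_smul_le_norm {v w : E} {c s : ℝ} (hs : 0 ≤ s) (hsw : s * ‖w‖ ≤ 2 * c)
    (hvw : c * ‖w‖ ≤ ⟪v, w⟫) : ‖v - s • w‖ ≤ ‖v‖ := by
  have hsq : ‖v - s • w‖ ^ 2 ≤ ‖v‖ ^ 2 := by
    rw [norm_sub_sq_real, real_inner_smul_right, norm_smul, Real.norm_of_nonneg hs]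
    nlinarith [mul_nonneg hs (norm_nonneg w)]
  exact (pow_le_pow_iff_left₀ (norm_nonneg _) (norm_nonneg _) two_ne_zero).1 hsq

variable [CompleteSpace E] {α : Type*} [MeasurableSpace α] {μ : Measure α} [IsProbabilityMeasure μ]

lemma le_inner_integral {g : α → E} (hg : Integrable g μ) {v : E} {c : ℝ}
    (h : ∀ᵐ p ∂μ, c ≤ ⟪v, g p⟫) : c ≤ ⟪v, ∫ p, g p ∂μ⟫ := by
  rw [← integral_inner hg]
  simpa using integral_mono_ae (integrable_const c) (hg.const_inner v) h

lemma mul_norm_integral_le_inner_integral {g : α → E} (hg_meas : AEStronglyMeasurable g μ)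
    (hg_norm : ∀ p, ‖g p‖ ≤ 1) {v : E} {c : ℝ} (hc : 0 ≤ c) (h : ∀ᵐ p ∂μ, c ≤ ⟪v, g p⟫) :
    c * ‖∫ p, g p ∂μ‖ ≤ ⟪v, ∫ p, g p ∂μ⟫ := by
  have hg : Integrable g μ := .of_bound hg_meas 1 (.of_forall hg_norm)
  have hnorm : ‖∫ p, g p ∂μ‖ ≤ 1 := by
    simpa using norm_integral_le_of_norm_le_const (μ := μ) (.of_forall hg_norm)
  calc c * ‖∫ p, g p ∂μ‖ ≤ c := mul_le_of_le_one_right hc hnorm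
    _ ≤ ⟪v, ∫ p, g p ∂μ⟫ := le_inner_integral hg h

end InnerProductSpace

theorem stmt15_general {n : ℕ} (a : EuclideanSpace ℝ (Fin n)) (ρ : ℝ)
    (μ : Measure (EuclideanSpace ℝ (Fin n))) [IsProbabilityMeasure μ]
    (hsupp : {x : EuclideanSpace ℝ (Fin n) | ∀ U ∈ nhds x, 0 < μ U} ⊆ ball a ρ)
    (H : EuclideanSpace ℝ (Fin n) → EuclideanSpace ℝ (Fin n))
    (hH : ∀ x, H x = ∫ p in ({x}ᶜ : Set (EuclideanSpace ℝ (Fin n))), ‖x - p‖⁻¹ • (x - p) ∂μ)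
    (σ : ℝ)
    (hσ : σ = sSup ((fun p => ‖p - a‖) '' {x : EuclideanSpace ℝ (Fin n) | ∀ U ∈ nhds x, 0 < μ U}))
    (x : EuclideanSpace ℝ (Fin n)) (hx : x ∈ closedBall a ρ)
    (hHx : H x ≠ 0) (hσx : σ < ‖x - a‖)
    (r : ℝ)
    (hr : r = sSup {t ∈ Set.Icc (0 : ℝ) (2 * ρ) | x - (t / ‖H x‖) • H x ∈ closedBall a ρ}) :
    r ≥ 2 * ‖x - a‖ * (‖x - a‖ - σ) / (‖x - a‖ + σ) := by
  have hS : {x : EuclideanSpace ℝ (Fin n) | ∀ U ∈ nhds x, 0 < μ U} = μ.support :=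
    Set.ext fun p => (Measure.mem_support_iff_forall p).symm
  rw [hS] at hsupp hσ
  have hσ_le : ∀ p ∈ μ.support, ‖p - a‖ ≤ σ := fun p hp =>
    hσ ▸ le_csSup ⟨ρ, Set.forall_mem_image.2 fun q hq => (mem_ball_iff_norm.1 (hsupp hq)).le⟩
      ⟨p, hp, rfl⟩
  have hσ0 : 0 ≤ σ := hσ ▸ Real.sSup_nonneg (Set.forall_mem_image.2 fun _ _ => norm_nonneg _)
  set R := ‖x - a‖
  set c := R * (R - σ) / (R + σ)
  have hc0 : 0 ≤ c := div_nonneg (mul_nonneg (by linarith) (by linarith)) (by linarith)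
  have hcR : c ≤ R := div_le_of_le_mul₀ (by linarith) (by linarith) (by nlinarith)
  have hRρ : R ≤ ρ := mem_closedBall_iff_norm.1 hx
  have hHx_eq : H x = ∫ p, ‖x - p‖⁻¹ • (x - p) ∂μ := by
    rw [hH, Measure.restrict_eq_self_of_ae_mem]
    filter_upwards [Measure.support_mem_ae (μ := μ)] with p hp
    rintro rfl
    exact hσx.not_ge (hσ_le p hp)
  have hinner : c * ‖H x‖ ≤ ⟪x - a, H x⟫ := by
    rw [hHx_eq]
    refine mul_norm_integral_le_inner_integral (by fun_prop) (fun p => norm_inv_norm_smul_le_one_s15 _)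
      hc0 ?_
    filter_upwards [Measure.support_mem_ae (μ := μ)] with p hp
    exact le_inner_inv_norm_smul_sub (hσ_le p hp) hσx
  have hHpos : 0 < ‖H x‖ := norm_pos_iff.2 hHx
  have hmem : x - (2 * c / ‖H x‖) • H x ∈ closedBall a ρ := by
    rw [mem_closedBall_iff_norm, sub_right_comm]
    refine (norm_sub_smul_le_norm (by positivity) ?_ hinner).trans hRρ
    rw [div_mul_cancel₀ _ hHpos.ne']
  have hbdd : BddAbove {t ∈ Set.Icc (0 : ℝ) (2 * ρ) | x - (t / ‖H x‖) • H x ∈ closedBall a ρ} :=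
    ⟨2 * ρ, fun t ht => ht.1.2⟩
  calc 2 * R * (R - σ) / (R + σ) = 2 * c := by ring
    _ ≤ r := hr ▸ le_csSup hbdd ⟨⟨by linarith, by linarith⟩, hmem⟩

/-- Euclidean case of Lemma 4.8. With `σ = sup{‖p-a‖ : p ∈ supp μ}`,
for `x ∈ B̄(a,ρ)` with `H x ≠ 0` and `σ < ‖x-a‖`, the exit time
`r_x = sup{t ∈ [0,2ρ] : x - t H(x)/‖H(x)‖ ∈ B̄(a,ρ)}` satisfies
`r_x ≥ 2‖x-a‖(‖x-a‖-σ)/(‖x-a‖+σ)`. -/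
theorem stmt15 {n : ℕ} (hn : 1 ≤ n) (a : EuclideanSpace ℝ (Fin n)) (ρ : ℝ) (hρ : 0 < ρ)
    (μ : Measure (EuclideanSpace ℝ (Fin n))) [IsProbabilityMeasure μ]
    (hsupp : {x : EuclideanSpace ℝ (Fin n) | ∀ U ∈ nhds x, 0 < μ U} ⊆ ball a ρ)
    (f : EuclideanSpace ℝ (Fin n) → ℝ)
    (hf : ∀ x, f x = ∫ p, ‖x - p‖ ∂μ)
    (H : EuclideanSpace ℝ (Fin n) → EuclideanSpace ℝ (Fin n))
    (hH : ∀ x, H x = ∫ p in ({x}ᶜ : Set (EuclideanSpace ℝ (Fin n))), ‖x - p‖⁻¹ • (x - p) ∂μ)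
    (σ : ℝ)
    (hσ : σ = sSup ((fun p => ‖p - a‖) '' {x : EuclideanSpace ℝ (Fin n) | ∀ U ∈ nhds x, 0 < μ U}))
    (x : EuclideanSpace ℝ (Fin n)) (hx : x ∈ closedBall a ρ)
    (hHx : H x ≠ 0) (hσx : σ < ‖x - a‖)
    (r : ℝ)
    (hr : r = sSup {t ∈ Set.Icc (0 : ℝ) (2 * ρ) | x - (t / ‖H x‖) • H x ∈ closedBall a ρ}) :
    r ≥ 2 * ‖x - a‖ * (‖x - a‖ - σ) / (‖x - a‖ + σ) :=
  stmt15_general a ρ μ hsupp H hH σ hσ x hx hHx hσx r hr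
end
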